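/- arXiv:1609.09565 — 8 statements merged into one kernel-verified Lean document; each statement's English description precedes it below -/
import Mathlib

section
/- Let A be the adjacency matrix of a connected undirected graph on n ≥ 1 vertices and let β, δ ∈ (0,1). Then the largest eigenvalue of the symmetric matrix (1−δ)I_n + βA is greater than 1 if and only if there exists a vector v ∈ ℝ^n with every entry strictly positive such that every entry of (βA − δI_n)v is strictly positive. -/
open Matrix Finset

/-!
Put `M = (1 - δ)I + βA`, so that `βA - δI = M - I` and the condition reads `v ≺ M v` for some
`v ≻ 0`. If `λmax(M) ≤ 1`, the Rayleigh bound `vᵀ M v ≤ vᵀ v` contradicts `v ≺ M v`. Conversely,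
let `u` be an eigenvector for `λ = λmax(M) > 1`. Since `M` is entrywise nonnegative,
`λ|u| ⪯ M|u|`. Since moreover its diagonal is positive and `G` is connected, `M` is primitive: some
power `M ^ k` is entrywise positive. Then `v = M ^ k |u| ≻ 0` and `λ v ⪯ M v`, so `v ≺ M v`.
-/

/-- The largest eigenvalue of a (symmetric) real matrix, as the supremum of its real spectrum. -/
noncomputable def lamMax {n : ℕ} (M : Matrix (Fin n) (Fin n) ℝ) : ℝ :=
  sSup (spectrum ℝ M)

namespace Matrix

variable {ι : Type*} [Fintype ι]

theorem exists_mulVec_eq_smul_of_mem_spectrum [DecidableEq ι] {K : Type*} [Field K]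
    {M : Matrix ι ι K} {μ : K} (h : μ ∈ spectrum K M) : ∃ u ≠ 0, M *ᵥ u = μ • u := by
  rw [← spectrum_toLin', ← Module.End.hasEigenvalue_iff_mem_spectrum] at h
  obtain ⟨u, hu⟩ := h.exists_hasEigenvector
  exact ⟨u, hu.2, by simpa using hu.apply_eq_smul⟩

theorem IsHermitian.dotProduct_mulVec_le_of_spectrum_le [DecidableEq ι] {M : Matrix ι ι ℝ}
    (hM : M.IsHermitian) {c : ℝ} (hc : ∀ μ ∈ spectrum ℝ M, μ ≤ c) (x : ι → ℝ) :
    x ⬝ᵥ (M *ᵥ x) ≤ c * (x ⬝ᵥ x) := by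
  have hpsd : (c • 1 - M).PosSemidef := by
    refine posSemidef_iff_isHermitian_and_spectrum_nonneg.mpr
      ⟨(isHermitian_one.smul (IsSelfAdjoint.all c)).sub hM, fun a ha => ?_⟩
    rw [← Algebra.algebraMap_eq_smul_one, ← spectrum.singleton_sub_eq] at ha
    obtain ⟨_, rfl, μ, hμ, rfl⟩ := ha
    simpa using hc μ hμ
  have := hpsd.dotProduct_mulVec_nonneg x
  simp only [star_trivial, sub_mulVec, smul_mulVec, one_mulVec, dotProduct_sub,
    dotProduct_smul, smul_eq_mul] at this
  linarith

section Nonneg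

variable {R : Type*} [CommRing R] [LinearOrder R] [IsStrictOrderedRing R] {M : Matrix ι ι R}

theorem abs_mulVec_le_mulVec_abs (hM : ∀ i j, 0 ≤ M i j) (x : ι → R) : |M *ᵥ x| ≤ M *ᵥ |x| :=
  fun i => (abs_sum_le_sum_abs _ _).trans_eq <| sum_congr rfl fun j _ => by
    rw [abs_mul, abs_of_nonneg (hM i j), Pi.abs_apply]

theorem mulVec_mono (hM : ∀ i j, 0 ≤ M i j) : Monotone (M *ᵥ ·) :=
  fun _ _ hxy i => sum_le_sum fun j _ => mul_le_mul_of_nonneg_left (hxy j) (hM i j)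

theorem mulVec_apply_pos (hM : ∀ i j, 0 < M i j) {x : ι → R} (hx : 0 ≤ x) (hx0 : x ≠ 0) (i : ι) :
    0 < (M *ᵥ x) i := by
  obtain ⟨j, hj⟩ := Function.ne_iff.mp hx0
  exact sum_pos' (fun k _ => mul_nonneg (hM i k).le (hx k))
    ⟨j, mem_univ j, mul_pos (hM i j) ((hx j).lt_of_ne' hj)⟩

theorem pow_apply_pos_of_walk [DecidableEq ι] {G : SimpleGraph ι} (hM : ∀ i j, 0 ≤ M i j)
    (hdiag : ∀ i, 0 < M i i) (hadj : ∀ i j, G.Adj i j → 0 < M i j) :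
    ∀ {i j : ι} (p : G.Walk i j) {k : ℕ}, p.length ≤ k → 0 < (M ^ k) i j := by
  have hterm : ∀ k i l j, 0 < M i l → 0 < (M ^ k) l j → 0 < (M ^ (k + 1)) i j :=
    fun k i l j hil hlj => by
      rw [pow_succ', mul_apply]
      exact sum_pos' (fun m _ => mul_nonneg (hM i m) (pow_apply_nonneg hM k m j))
        ⟨l, mem_univ l, mul_pos hil hlj⟩
  intro i j p k hk
  induction k generalizing i with
  | zero =>
    obtain rfl := p.eq_of_length_eq_zero (Nat.le_zero.mp hk)
    simp
  | succ k ih =>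
    cases p with
    | nil => exact hterm k _ _ _ (hdiag _) (ih .nil (Nat.zero_le k))
    | cons hadj' q =>
      exact hterm k _ _ _ (hadj _ _ hadj') (ih q (by simpa using hk))

theorem IsPrimitive.exists_pos_lt_mulVec_of_mulVec_eq_smul [DecidableEq ι] (hM : M.IsPrimitive)
    {μ : R} (hμ : 1 < μ) {u : ι → R} (hu0 : u ≠ 0) (hu : M *ᵥ u = μ • u) :
    ∃ v : ι → R, (∀ i, 0 < v i) ∧ ∀ i, v i < (M *ᵥ v) i := by
  obtain ⟨k, -, hk⟩ := hM.exists_pos_pow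
  have hsub : μ • |u| ≤ M *ᵥ |u| := by
    calc μ • |u| = |M *ᵥ u| := by
          ext i; simp [hu, abs_mul, abs_of_pos (zero_lt_one.trans hμ)]
      _ ≤ M *ᵥ |u| := abs_mulVec_le_mulVec_abs hM.nonneg u
  set v := M ^ k *ᵥ |u|
  have hv : ∀ i, 0 < v i := mulVec_apply_pos hk (abs_nonneg u) (by simpa using hu0)
  have hsuper : μ • v ≤ M *ᵥ v := by
    calc μ • v = M ^ k *ᵥ (μ • |u|) := (mulVec_smul _ _ _).symm
      _ ≤ M ^ k *ᵥ (M *ᵥ |u|) := mulVec_mono (pow_apply_nonneg hM.nonneg k) hsub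
      _ = M *ᵥ v := by rw [mulVec_mulVec, mulVec_mulVec, pow_mul_comm']
  exact ⟨v, hv, fun i => (lt_mul_left (hv i) hμ).trans_le (hsuper i)⟩

end Nonneg

end Matrix

namespace SimpleGraph

variable {ι R : Type*} [Fintype ι] [DecidableEq ι] [CommRing R] [LinearOrder R]
  [IsStrictOrderedRing R] {G : SimpleGraph ι} [DecidableRel G.Adj]

theorem Connected.isPrimitive_smul_one_add_smul_adjMatrix (hG : G.Connected) {a b : R}
    (ha : 0 < a) (hb : 0 < b) : (a • (1 : Matrix ι ι R) + b • G.adjMatrix R).IsPrimitive := by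
  have happly : ∀ i j, (a • (1 : Matrix ι ι R) + b • G.adjMatrix R) i j =
      (if i = j then a else 0) + (if G.Adj i j then b else 0) := fun i j => by
    simp [one_apply, adjMatrix_apply]
  have hnonneg : ∀ i j, 0 ≤ (a • (1 : Matrix ι ι R) + b • G.adjMatrix R) i j := fun i j => by
    rw [happly]; split_ifs <;> positivity
  refine ⟨hnonneg, Fintype.card ι, Fintype.card_pos_iff.2 hG.nonempty, fun i j => ?_⟩
  obtain ⟨p⟩ := hG.preconnected i j
  refine pow_apply_pos_of_walk hnonneg (fun i => by simp [happly, ha]) (fun i j h => ?_)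
    p.toPath.1 p.toPath.2.length_lt.le
  rw [happly, if_neg h.ne, if_pos h, zero_add]
  exact hb

end SimpleGraph

theorem le_lamMax {n : ℕ} {M : Matrix (Fin n) (Fin n) ℝ} {μ : ℝ} (h : μ ∈ spectrum ℝ M) :
    μ ≤ lamMax M :=
  le_csSup finite_real_spectrum.bddAbove h

theorem lamMax_mem_spectrum_of_ne_zero {n : ℕ} {M : Matrix (Fin n) (Fin n) ℝ}
    (h : lamMax M ≠ 0) : lamMax M ∈ spectrum ℝ M := by
  refine Set.Nonempty.csSup_mem ?_ finite_real_spectrum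
  rw [Set.nonempty_iff_ne_empty]
  rintro hempty
  exact h (by rw [lamMax, hempty, Real.sSup_empty])

/-- For a connected graph on `n ≥ 1` vertices with adjacency matrix `A` and
`β, δ ∈ (0,1)`, the largest eigenvalue of `(1−δ)I + βA` exceeds `1` iff there is an entrywise
strictly positive vector `v` with `(βA − δI)v` entrywise strictly positive. -/
theorem stmt0 {n : ℕ} (hn : 1 ≤ n) (G : SimpleGraph (Fin n)) [DecidableRel G.Adj]
    (hG : G.Connected) (β δ : ℝ) (hβ : β ∈ Set.Ioo (0 : ℝ) 1) (hδ : δ ∈ Set.Ioo (0 : ℝ) 1) :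
    1 < lamMax ((1 - δ) • (1 : Matrix (Fin n) (Fin n) ℝ) + β • G.adjMatrix ℝ) ↔
      ∃ v : Fin n → ℝ, (∀ i, 0 < v i) ∧
        ∀ i, 0 < ((β • G.adjMatrix ℝ - δ • (1 : Matrix (Fin n) (Fin n) ℝ)) *ᵥ v) i := by
  set M := (1 - δ) • (1 : Matrix (Fin n) (Fin n) ℝ) + β • G.adjMatrix ℝ
  have hB : β • G.adjMatrix ℝ - δ • (1 : Matrix (Fin n) (Fin n) ℝ) = M - 1 := by
    simp only [M, sub_smul, one_smul]; abel
  simp only [hB, sub_mulVec, one_mulVec, Pi.sub_apply, sub_pos]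
  constructor
  · intro hlam
    obtain ⟨u, hu0, hu⟩ := exists_mulVec_eq_smul_of_mem_spectrum
      (lamMax_mem_spectrum_of_ne_zero (zero_lt_one.trans hlam).ne')
    exact (hG.isPrimitive_smul_one_add_smul_adjMatrix (sub_pos.2 hδ.2) hβ.1
      ).exists_pos_lt_mulVec_of_mulVec_eq_smul hlam hu0 hu
  · rintro ⟨v, hv, hMv⟩
    by_contra! hle
    have hM : M.IsHermitian := (isHermitian_one.smul (IsSelfAdjoint.all _)).add
      ((G.isHermitian_adjMatrix ℝ).smul (IsSelfAdjoint.all _))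
    have hrayleigh :=
      hM.dotProduct_mulVec_le_of_spectrum_le (fun μ hμ => (le_lamMax hμ).trans hle) v
    have hlt : v ⬝ᵥ v < v ⬝ᵥ (M *ᵥ v) := sum_lt_sum_of_nonempty (univ_nonempty_iff.2 ⟨⟨0, hn⟩⟩)
      fun i _ => mul_lt_mul_of_pos_left (hMv i) (hv i)
    linarith
end

section
/- If βλmax(A)/δ < 1 (equivalently, λmax((1−δ)I_n + βA) < 1), then the origin is the unique fixed point of the SIS nonlinear map Φ in [0,1]^n, and it is globally stable: for every x ∈ [0,1]^n the iterates Φ^t(x) converge to the zero vector as t → ∞. -/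
/-!
For `x ∈ [0,1]ⁿ`, the Weierstrass product inequality `1 - ∏ (1 - aⱼ) ≤ ∑ aⱼ` gives
`Φ(x) ≤ M x` coordinatewise, where `M = (1 - δ)Iₙ + βA`, and `Φ` preserves `[0,1]ⁿ`; since `M` has
nonnegative entries, `0 ≤ Φᵗ(x) ≤ Mᵗ x`. As `A` is symmetric with nonnegative entries,
`|xᵀAx| ≤ |x|ᵀA|x| ≤ λmax(A)‖x‖²`, so the spectral norm of `A` is at most `λmax(A)` and
`‖M‖ ≤ 1 - δ + βλmax(A) < 1`. Hence `Mᵗ x → 0`, and a fixed point, being the limit of its constant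
orbit, is `0`.
-/

open Matrix Finset

/-- The SIS nonlinear (mean-field) map
`Φ_i(x) = (1−δ)x_i + (1−(1−δ)x_i)(1 − ∏_{j∈N_i}(1−βx_j))`. -/
noncomputable def sisPhi {n : ℕ} (G : SimpleGraph (Fin n)) [DecidableRel G.Adj]
    (β δ : ℝ) (x : Fin n → ℝ) : Fin n → ℝ :=
  fun i => (1 - δ) * x i + (1 - (1 - δ) * x i) * (1 - ∏ j ∈ G.neighborFinset i, (1 - β * x j))

open Filter Topology

theorem one_sub_sum_le_prod_one_sub {R ι : Type*} [CommRing R] [LinearOrder R]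
    [IsStrictOrderedRing R] (s : Finset ι) {a : ι → R} (h0 : ∀ j ∈ s, 0 ≤ a j)
    (h1 : ∀ j ∈ s, a j ≤ 1) :
    1 - ∑ j ∈ s, a j ≤ ∏ j ∈ s, (1 - a j) := by
  induction s using Finset.cons_induction with
  | empty => simp
  | cons i s hi ih =>
    rw [prod_cons, sum_cons]
    have hs := ih (fun j hj => h0 j (mem_cons_of_mem hj)) fun j hj => h1 j (mem_cons_of_mem hj)
    have hP : 0 ≤ ∏ j ∈ s, (1 - a j) :=
      prod_nonneg fun j hj => sub_nonneg.2 (h1 j (mem_cons_of_mem hj))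
    have hS : 0 ≤ ∑ j ∈ s, a j := sum_nonneg fun j hj => h0 j (mem_cons_of_mem hj)
    nlinarith [h0 i (mem_cons_self i s), h1 i (mem_cons_self i s)]

theorem prod_one_sub_mem_Icc {R ι : Type*} [CommRing R] [PartialOrder R] [IsOrderedRing R]
    (s : Finset ι) {a : ι → R}
    (ha : ∀ j ∈ s, a j ∈ Set.Icc 0 1) : ∏ j ∈ s, (1 - a j) ∈ Set.Icc 0 1 :=
  ⟨prod_nonneg fun j hj => sub_nonneg.2 (ha j hj).2,
    prod_le_one (fun j hj => sub_nonneg.2 (ha j hj).2) fun j hj => sub_le_self _ (ha j hj).1⟩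

namespace Matrix

theorem mulVec_mono_of_nonneg {R m ι : Type*} [Fintype ι] [Semiring R] [PartialOrder R]
    [IsOrderedRing R] {M : Matrix m ι R} (hM : ∀ i j, 0 ≤ M i j) {x y : ι → R} (hxy : x ≤ y) :
    M *ᵥ x ≤ M *ᵥ y :=
  fun i => sum_le_sum fun j _ => mul_le_mul_of_nonneg_left (hxy j) (hM i j)

theorem abs_dotProduct_mulVec_le_abs {ι : Type*} [Fintype ι] {A : Matrix ι ι ℝ}
    (hA : ∀ i j, 0 ≤ A i j) (x y : ι → ℝ) :
    |x ⬝ᵥ A *ᵥ y| ≤ |x| ⬝ᵥ A *ᵥ |y| := by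
  simp only [dotProduct, mulVec, mul_sum]
  refine (abs_sum_le_sum_abs _ _).trans (sum_le_sum fun i _ => ?_)
  refine (abs_sum_le_sum_abs _ _).trans (sum_le_sum fun j _ => ?_)
  simp [abs_mul, abs_of_nonneg (hA i j)]

variable {ι : Type*} [Fintype ι] [DecidableEq ι] {A : Matrix ι ι ℝ}

theorem IsHermitian.dotProduct_mulVec_le (hA : A.IsHermitian) (x : ι → ℝ) :
    x ⬝ᵥ A *ᵥ x ≤ sSup (spectrum ℝ A) * (x ⬝ᵥ x) := by
  have hpsd : (algebraMap ℝ _ (sSup (spectrum ℝ A)) - A).PosSemidef := by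
    rw [posSemidef_iff_isHermitian_and_spectrum_nonneg, ← spectrum.singleton_sub_eq]
    refine ⟨(isHermitian_diagonal _).sub hA, ?_⟩
    rintro _ ⟨_, rfl, μ, hμ, rfl⟩
    exact sub_nonneg.2 (le_csSup A.finite_spectrum.bddAbove hμ)
  simpa [sub_mulVec, Algebra.algebraMap_eq_smul_one, smul_mulVec, dotProduct_smul] using
    hpsd.dotProduct_mulVec_nonneg x

theorem IsHermitian.abs_dotProduct_mulVec_le (hA : A.IsHermitian) (hA0 : ∀ i j, 0 ≤ A i j)
    (x : ι → ℝ) : |x ⬝ᵥ A *ᵥ x| ≤ sSup (spectrum ℝ A) * (x ⬝ᵥ x) := by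
  have hx : |x| ⬝ᵥ |x| = x ⬝ᵥ x := sum_congr rfl fun i _ => abs_mul_abs_self (x i)
  calc |x ⬝ᵥ A *ᵥ x| ≤ |x| ⬝ᵥ A *ᵥ |x| := abs_dotProduct_mulVec_le_abs hA0 x x
    _ ≤ sSup (spectrum ℝ A) * (x ⬝ᵥ x) := hx ▸ hA.dotProduct_mulVec_le |x|

theorem IsHermitian.sSup_spectrum_nonneg [Nonempty ι] (hA : A.IsHermitian)
    (hA0 : ∀ i j, 0 ≤ A i j) : 0 ≤ sSup (spectrum ℝ A) := by
  obtain ⟨i⟩ := ‹Nonempty ι›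
  simpa using (abs_nonneg _).trans (hA.abs_dotProduct_mulVec_le hA0 (Pi.single i 1))

open scoped Matrix.Norms.L2Operator

theorem IsHermitian.l2_opNorm_le_sSup_spectrum [Nonempty ι] (hA : A.IsHermitian)
    (hA0 : ∀ i j, 0 ≤ A i j) : ‖A‖ ≤ sSup (spectrum ℝ A) := by
  have hT : (toEuclideanCLM (𝕜 := ℝ) A).IsSymmetric := isSymmetric_toEuclideanLin_iff.mpr hA
  rw [← l2_opNorm_toEuclideanCLM, ContinuousLinearMap.norm_eq_iSup_rayleighQuotient _ hT]
  refine ciSup_le fun x => ?_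
  rw [ContinuousLinearMap.rayleighQuotient, ContinuousLinearMap.reApplyInnerSelf_apply,
    real_inner_comm, RCLike.re_to_real, inner_toEuclideanCLM, ← real_inner_self_eq_norm_sq,
    abs_div]
  refine div_le_of_le_mul₀ (abs_nonneg _) (hA.sSup_spectrum_nonneg hA0) ?_
  rw [abs_of_nonneg real_inner_self_nonneg, EuclideanSpace.inner_eq_star_dotProduct, star_trivial]
  exact hA.abs_dotProduct_mulVec_le hA0 _

theorem tendsto_pow_mulVec_nhds_zero (hA : ‖A‖ < 1) (x : ι → ℝ) :
    Tendsto (fun t : ℕ => A ^ t *ᵥ x) atTop (𝓝 0) := by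
  simpa [Function.comp_def] using ((continuous_id.matrix_mulVec continuous_const).tendsto 0).comp
    (tendsto_pow_atTop_nhds_zero_of_norm_lt_one hA)

end Matrix

section SIS

variable {n : ℕ} (G : SimpleGraph (Fin n)) [DecidableRel G.Adj] {β δ : ℝ}

noncomputable def sisLinearization (β δ : ℝ) : Matrix (Fin n) (Fin n) ℝ :=
  (1 - δ) • 1 + β • G.adjMatrix ℝ

theorem sisLinearization_mulVec_apply (x : Fin n → ℝ) (i : Fin n) :
    (sisLinearization G β δ *ᵥ x) i = (1 - δ) * x i + β * ∑ j ∈ G.neighborFinset i, x j := by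
  simp [sisLinearization, add_mulVec, smul_mulVec, SimpleGraph.adjMatrix_mulVec_apply]

theorem sisLinearization_nonneg (hβ : 0 ≤ β) (hδ : δ ≤ 1) (i j : Fin n) :
    0 ≤ sisLinearization G β δ i j := by
  simp only [sisLinearization, Matrix.add_apply, Matrix.smul_apply, one_apply,
    SimpleGraph.adjMatrix_apply, smul_eq_mul]
  split_ifs <;> linarith

open scoped Matrix.Norms.L2Operator in
theorem norm_sisLinearization_le [Nonempty (Fin n)] (hβ : 0 ≤ β) (hδ : δ ≤ 1) :
    ‖sisLinearization G β δ‖ ≤ 1 - δ + β * lamMax (G.adjMatrix ℝ) := by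
  have hA : (G.adjMatrix ℝ).IsHermitian := G.isSymm_adjMatrix
  have hA0 i j : 0 ≤ G.adjMatrix ℝ i j := by
    rw [SimpleGraph.adjMatrix_apply]
    split_ifs <;> norm_num
  calc ‖sisLinearization G β δ‖
      ≤ ‖(1 - δ) • (1 : Matrix (Fin n) (Fin n) ℝ)‖ + ‖β • G.adjMatrix ℝ‖ := norm_add_le _ _
    _ = 1 - δ + β * ‖G.adjMatrix ℝ‖ := by
      rw [norm_smul, norm_smul, CStarRing.norm_one, Real.norm_of_nonneg (sub_nonneg.2 hδ),
        Real.norm_of_nonneg hβ, mul_one]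
    _ ≤ 1 - δ + β * lamMax (G.adjMatrix ℝ) := by
      gcongr
      exact hA.l2_opNorm_le_sSup_spectrum hA0

theorem sisPhi_zero : sisPhi G β δ 0 = 0 := by
  ext i
  simp [sisPhi]

variable {G} in
theorem mapsTo_sisPhi (hβ : β ∈ Set.Icc 0 1) (hδ : δ ∈ Set.Icc 0 1) :
    Set.MapsTo (sisPhi G β δ) (Set.Icc 0 1) (Set.Icc 0 1) := by
  intro x hx
  have hp i := prod_one_sub_mem_Icc (G.neighborFinset i)
    fun j _ => unitInterval.mul_mem hβ ⟨hx.1 j, hx.2 j⟩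
  have hu i : (1 - δ) * x i ∈ Set.Icc 0 1 :=
    unitInterval.mul_mem ⟨sub_nonneg.2 hδ.2, sub_le_self 1 hδ.1⟩ ⟨hx.1 i, hx.2 i⟩
  refine ⟨fun i => ?_, fun i => ?_⟩ <;>
  · simp only [sisPhi, Pi.zero_apply, Pi.one_apply]
    nlinarith [(hp i).1, (hp i).2, (hu i).1, (hu i).2]

theorem sisPhi_le_sisLinearization_mulVec (hβ : β ∈ Set.Icc 0 1) (hδ : δ ∈ Set.Icc 0 1)
    {x : Fin n → ℝ} (hx : x ∈ Set.Icc 0 1) : sisPhi G β δ x ≤ sisLinearization G β δ *ᵥ x := by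
  intro i
  have hβx j : β * x j ∈ Set.Icc 0 1 := unitInterval.mul_mem hβ ⟨hx.1 j, hx.2 j⟩
  have hp := prod_one_sub_mem_Icc (G.neighborFinset i) fun j _ => hβx j
  have hw := one_sub_sum_le_prod_one_sub (G.neighborFinset i) (fun j _ => (hβx j).1)
    fun j _ => (hβx j).2
  have hu : (1 - δ) * x i ∈ Set.Icc 0 1 :=
    unitInterval.mul_mem ⟨sub_nonneg.2 hδ.2, sub_le_self 1 hδ.1⟩ ⟨hx.1 i, hx.2 i⟩
  rw [sisLinearization_mulVec_apply, mul_sum]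
  simp only [sisPhi]
  nlinarith [hp.1, hp.2, hu.1, hu.2]

theorem iterate_sisPhi_le (hβ : β ∈ Set.Icc 0 1) (hδ : δ ∈ Set.Icc 0 1)
    {x : Fin n → ℝ} (hx : x ∈ Set.Icc 0 1) (t : ℕ) :
    (sisPhi G β δ)^[t] x ≤ sisLinearization G β δ ^ t *ᵥ x := by
  induction t with
  | zero => simp
  | succ t ih =>
    rw [Function.iterate_succ_apply', pow_succ', ← mulVec_mulVec]
    exact (sisPhi_le_sisLinearization_mulVec G hβ hδ ((mapsTo_sisPhi hβ hδ).iterate t hx)).trans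
      (mulVec_mono_of_nonneg (sisLinearization_nonneg G hβ.1 hδ.2) ih)

open scoped Matrix.Norms.L2Operator in
theorem tendsto_iterate_sisPhi_nhds_zero [Nonempty (Fin n)] (hβ : β ∈ Set.Icc 0 1)
    (hδ : δ ∈ Set.Icc 0 1) (h : β * lamMax (G.adjMatrix ℝ) < δ) {x : Fin n → ℝ}
    (hx : x ∈ Set.Icc 0 1) :
    Tendsto (fun t => (sisPhi G β δ)^[t] x) atTop (𝓝 0) := by
  have hM : ‖sisLinearization G β δ‖ < 1 := by
    linarith [norm_sisLinearization_le G hβ.1 hδ.2]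
  have hlin := tendsto_pow_mulVec_nhds_zero hM x
  rw [tendsto_pi_nhds] at hlin ⊢
  exact fun i => squeeze_zero (fun t => ((mapsTo_sisPhi hβ hδ).iterate t hx).1 i)
    (fun t => iterate_sisPhi_le G hβ hδ hx t i) (hlin i)

end SIS

theorem stmt1_general {n : ℕ} (hn : 1 ≤ n) (G : SimpleGraph (Fin n)) [DecidableRel G.Adj]
    (β δ : ℝ) (hβ : β ∈ Set.Ioo (0 : ℝ) 1) (hδ : δ ∈ Set.Ioo (0 : ℝ) 1)
    (h : β * lamMax (G.adjMatrix ℝ) / δ < 1) :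
    sisPhi G β δ 0 = 0 ∧
    (∀ x ∈ Set.Icc (0 : Fin n → ℝ) 1, sisPhi G β δ x = x → x = 0) ∧
    ∀ x ∈ Set.Icc (0 : Fin n → ℝ) 1,
      Filter.Tendsto (fun t => (sisPhi G β δ)^[t] x) Filter.atTop (nhds 0) := by
  have : Nonempty (Fin n) := ⟨⟨0, hn⟩⟩
  have hconv x (hx : x ∈ Set.Icc 0 1) := tendsto_iterate_sisPhi_nhds_zero G
    (Set.Ioo_subset_Icc_self hβ) (Set.Ioo_subset_Icc_self hδ) ((div_lt_one hδ.1).1 h) hx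
  refine ⟨sisPhi_zero G, fun x hx hfix => ?_, hconv⟩
  exact tendsto_nhds_unique (by simp [Function.iterate_fixed hfix]) (hconv x hx)

/-- If `β λmax(A) / δ < 1` then the origin is the unique fixed point of the
SIS nonlinear map `Φ` in `[0,1]^n`, and it is globally stable: for every `x ∈ [0,1]^n` the
iterates `Φ^t(x)` converge to the zero vector. -/
theorem stmt1 {n : ℕ} (hn : 1 ≤ n) (G : SimpleGraph (Fin n)) [DecidableRel G.Adj]
    (hG : G.Connected) (β δ : ℝ) (hβ : β ∈ Set.Ioo (0 : ℝ) 1) (hδ : δ ∈ Set.Ioo (0 : ℝ) 1)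
    (h : β * lamMax (G.adjMatrix ℝ) / δ < 1) :
    sisPhi G β δ 0 = 0 ∧
    (∀ x ∈ Set.Icc (0 : Fin n → ℝ) 1, sisPhi G β δ x = x → x = 0) ∧
    ∀ x ∈ Set.Icc (0 : Fin n → ℝ) 1,
      Filter.Tendsto (fun t => (sisPhi G β δ)^[t] x) Filter.atTop (nhds 0) :=
  stmt1_general hn G β δ hβ hδ h
end

section
/- Let G be a connected undirected graph on n ≥ 1 vertices with adjacency matrix A, let β, δ ∈ (0,1), and suppose βλmax(A)/δ > 1. Let Ξ = (Ξ_1,…,Ξ_n) : [0,1]^n → [0,1]^n be twice continuously differentiable and satisfy: (a) Ξ_i(0) = 0 and ∂Ξ_i/∂x_j(0) = βA_{ij} for all i, j; (b) at every point of [0,1]^n, ∂Ξ_i/∂x_j > 0 whenever i ∈ N_j and ∂Ξ_i/∂x_j = 0 whenever i ∉ N_j; (c) ∂²Ξ_i/(∂x_j∂x_k) ≤ 0 on [0,1]^n for all i, j, k. Let ω : [0,1] → [0,∞) be differentiable and satisfy: (d) ω(0) = 0 and ω(1) ≥ 1; (e) ω′(0) = δ and ω′(s) > 0 for all s ∈ (0,1);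 (f) ω(s₁)/s₁ < ω(s₂)/s₂ whenever 0 < s₁ < s₂ ≤ 1. Define Ψ : [0,1]^n → ℝ^n by Ψ_i(x) = Ξ_i(x) − ω(x_i). Then Ψ has exactly one zero in [0,1]^n other than the origin. -/
/-!
The partial derivatives of `Ξ` are nonnegative, so `Ξ` is monotone on the cube, and its
nonpositive second derivatives make it concave along rays: `κ Ξ(y) ≤ Ξ(κ y)` for `κ ∈ [0,1]`.
Inverting the increasing `ω` turns `Ψ(x) = 0` into a fixed-point problem `x = T x` for a monotone
self-map `T` of the cube. Above the threshold, a small multiple `ε u` of a nonnegative vector with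
`λmax(A) u ≤ A u` is a subsolution, `ω(ε u) ≤ Ξ(ε u)`, so the Knaster–Tarski argument on the
order interval `[ε u, 1]` yields a nonzero solution.

Along an edge `Ξ` passes positivity on, so by connectivity every nonzero solution is strictly
positive. For two of them `x` and `y`, the largest `κ` with `κ y ≤ x` is at least `1`: otherwise,
at a coordinate `i` where it is attained,
`ω(κ y_i) = Ξ_i(x) ≥ Ξ_i(κ y) ≥ κ Ξ_i(y) = κ ω(y_i)`, contradicting the strict increase of
`ω(s)/s`. By symmetry `x = y`.
-/

open Matrix Finset

section Partials

variable {ι : Type*} [Fintype ι] [DecidableEq ι]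

theorem ContinuousLinearMap.apply_eq_sum_smul_apply_single {M : Type*} [AddCommMonoid M]
    [Module ℝ M] [TopologicalSpace M] (L : (ι → ℝ) →L[ℝ] M) (d : ι → ℝ) :
    L d = ∑ j, d j • L (Pi.single j 1) := by
  conv_lhs => rw [pi_eq_sum_univ' d]
  simp only [map_sum, map_smul]

theorem exists_sub_eq_sum_mul_partial {f : (ι → ℝ) → ℝ} {s : Set (ι → ℝ)} (hs : Convex ℝ s)
    (hf : Differentiable ℝ f) {x y : ι → ℝ} (hx : x ∈ s) (hy : y ∈ s) :
    ∃ z ∈ s, f y - f x = ∑ j, (y j - x j) * fderiv ℝ f z (Pi.single j 1) := by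
  obtain ⟨z, hz, h⟩ := domain_mvt (fun z _ => (hf z).hasFDerivAt.hasFDerivWithinAt) hs hx hy
  exact ⟨z, hs.segment_subset hx hy hz,
    h.trans (ContinuousLinearMap.apply_eq_sum_smul_apply_single _ _)⟩

theorem monotoneOn_of_partial_nonneg {f : (ι → ℝ) → ℝ} {s : Set (ι → ℝ)} (hs : Convex ℝ s)
    (hf : Differentiable ℝ f) (h : ∀ z ∈ s, ∀ j, 0 ≤ fderiv ℝ f z (Pi.single j 1)) :
    MonotoneOn f s := by
  intro x hx y hy hxy
  obtain ⟨z, hz, hsub⟩ := exists_sub_eq_sum_mul_partial hs hf hx hy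
  have : 0 ≤ f y - f x :=
    hsub ▸ sum_nonneg fun j _ => mul_nonneg (sub_nonneg.2 (hxy j)) (h z hz j)
  linarith

theorem lt_of_partial_pos {f : (ι → ℝ) → ℝ} {s : Set (ι → ℝ)} (hs : Convex ℝ s)
    (hf : Differentiable ℝ f) (h : ∀ z ∈ s, ∀ j, 0 ≤ fderiv ℝ f z (Pi.single j 1)) {m : ι}
    (hm : ∀ z ∈ s, 0 < fderiv ℝ f z (Pi.single m 1)) {x y : ι → ℝ} (hx : x ∈ s) (hy : y ∈ s)
    (hxy : x ≤ y) (hxym : x m < y m) : f x < f y := by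
  obtain ⟨z, hz, hsub⟩ := exists_sub_eq_sum_mul_partial hs hf hx hy
  have : 0 < f y - f x := hsub ▸ sum_pos' (fun j _ => mul_nonneg (sub_nonneg.2 (hxy j)) (h z hz j))
    ⟨m, mem_univ m, mul_pos (sub_pos.2 hxym) (hm z hz)⟩
  linarith

theorem ContinuousLinearMap.apply_apply_nonpos_of_nonneg
    {L : (ι → ℝ) →L[ℝ] (ι → ℝ) →L[ℝ] ℝ} (hL : ∀ j k, L (Pi.single j 1) (Pi.single k 1) ≤ 0)
    {d : ι → ℝ} (hd : 0 ≤ d) : L d d ≤ 0 := by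
  have hrow (j : ι) : L (Pi.single j 1) d ≤ 0 := by
    rw [(L (Pi.single j 1)).apply_eq_sum_smul_apply_single d]
    exact sum_nonpos fun k _ => mul_nonpos_of_nonneg_of_nonpos (hd k) (hL j k)
  rw [L.apply_eq_sum_smul_apply_single d, _root_.sum_apply]
  exact sum_nonpos fun j _ => mul_nonpos_of_nonneg_of_nonpos (hd j) (hrow j)

end Partials

section LineRestriction

variable {E F : Type*} [NormedAddCommGroup E] [NormedSpace ℝ E] [NormedAddCommGroup F]
  [NormedSpace ℝ F]

theorem DifferentiableAt.hasDerivAt_comp_add_smul {φ : E → F} {x d : E} {t : ℝ}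
    (h : DifferentiableAt ℝ φ (x + t • d)) :
    HasDerivAt (fun s : ℝ => φ (x + s • d)) (fderiv ℝ φ (x + t • d) d) t := by
  have hline : HasDerivAt (fun s : ℝ => x + s • d) d t := by
    simpa using ((hasDerivAt_id t).smul_const d).const_add x
  exact h.hasFDerivAt.comp_hasDerivAt t hline

theorem fderiv_fderiv_apply {φ : E → F} {p : E} (h : DifferentiableAt ℝ (fderiv ℝ φ) p)
    (u v : E) : fderiv ℝ (fun y => fderiv ℝ φ y u) p v = fderiv ℝ (fderiv ℝ φ) p v u := by
  simp [fderiv_clm_apply h (differentiableAt_const u)]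

end LineRestriction

section Concavity

variable {ι : Type*} [Fintype ι] [DecidableEq ι] {f : (ι → ℝ) → ℝ} {s : Set (ι → ℝ)}

theorem concaveOn_comp_segment_of_second_partial_nonpos (hs : Convex ℝ s) (hf : ContDiff ℝ 2 f)
    (h2 : ∀ z ∈ s, ∀ j k, fderiv ℝ (fun y => fderiv ℝ f y (Pi.single k 1)) z (Pi.single j 1) ≤ 0)
    {x y : ι → ℝ} (hx : x ∈ s) (hy : y ∈ s) (hxy : x ≤ y) :
    ConcaveOn ℝ (Set.Icc 0 1) (fun t : ℝ => f (x + t • (y - x))) := by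
  have hf1 : Differentiable ℝ f := hf.differentiable two_ne_zero
  have hf2 : Differentiable ℝ (fderiv ℝ f) :=
    (hf.fderiv_right (m := 1) (by norm_num)).differentiable one_ne_zero
  refine concaveOn_of_hasDerivWithinAt2_nonpos (convex_Icc 0 1)
    (f' := fun t => fderiv ℝ f (x + t • (y - x)) (y - x))
    (f'' := fun t => fderiv ℝ (fun z => fderiv ℝ f z (y - x)) (x + t • (y - x)) (y - x))
    (fun t _ => (hf1 _).hasDerivAt_comp_add_smul.continuousAt.continuousWithinAt)
    (fun t _ => (hf1 _).hasDerivAt_comp_add_smul.hasDerivWithinAt)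
    (fun t _ => ((hf2 _).clm_apply (differentiableAt_const _)).hasDerivAt_comp_add_smul
      |>.hasDerivWithinAt) fun t ht => ?_
  have hmem : x + t • (y - x) ∈ s := hs.add_smul_sub_mem hx hy (interior_subset ht)
  rw [fderiv_fderiv_apply (hf2 _)]
  refine ContinuousLinearMap.apply_apply_nonpos_of_nonneg (fun j k => ?_) (sub_nonneg.2 hxy)
  rw [← fderiv_fderiv_apply (hf2 _)]
  exact h2 _ hmem j k

theorem mul_le_apply_smul_of_second_partial_nonpos (hs : Convex ℝ s) (hf : ContDiff ℝ 2 f)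
    (h2 : ∀ z ∈ s, ∀ j k, fderiv ℝ (fun y => fderiv ℝ f y (Pi.single k 1)) z (Pi.single j 1) ≤ 0)
    (h0 : 0 ∈ s) (hf0 : f 0 = 0) {y : ι → ℝ} (hy : y ∈ s) (hy0 : 0 ≤ y) {κ : ℝ}
    (hκ : κ ∈ Set.Icc 0 1) : κ * f y ≤ f (κ • y) := by
  have h := (concaveOn_comp_segment_of_second_partial_nonpos hs hf h2 h0 hy hy0).2
    (Set.left_mem_Icc.2 zero_le_one) (Set.right_mem_Icc.2 zero_le_one) (sub_nonneg.2 hκ.2) hκ.1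
    (by ring)
  simpa [hf0] using h

end Concavity

theorem exists_fixedPoint_of_monotoneOn_Icc {α : Type*} [ConditionallyCompleteLattice α]
    {f : α → α} {a b : α} (hab : a ≤ b) (hf : MonotoneOn f (Set.Icc a b))
    (hmaps : Set.MapsTo f (Set.Icc a b) (Set.Icc a b)) : ∃ x ∈ Set.Icc a b, f x = x := by
  set S := {x ∈ Set.Icc a b | x ≤ f x}
  have hS : BddAbove S := ⟨b, fun x hx => hx.1.2⟩
  have haS : a ∈ S := ⟨⟨le_rfl, hab⟩, (hmaps ⟨le_rfl, hab⟩).1⟩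
  have hc : sSup S ∈ Set.Icc a b := ⟨le_csSup hS haS, csSup_le ⟨a, haS⟩ fun x hx => hx.1.2⟩
  have hcf : sSup S ≤ f (sSup S) :=
    csSup_le ⟨a, haS⟩ fun x hx => hx.2.trans (hf hx.1 hc (le_csSup hS hx))
  have hfc : f (sSup S) ∈ S := ⟨hmaps hc, hf hc (hmaps hc) hcf⟩
  exact ⟨sSup S, hc, le_antisymm (le_csSup hS hfc) hcf⟩

theorem SimpleGraph.Connected.forall_of_adj_imp {V : Type*} {G : SimpleGraph V}
    (hG : G.Connected) {p : V → Prop} (hp : ∀ a b, G.Adj a b → p a → p b) (h : ∃ a, p a)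
    (b : V) : p b := by
  obtain ⟨a, ha⟩ := h
  obtain ⟨w⟩ := hG a b
  induction w with
  | nil => exact ha
  | cons hadj _ ih => exact ih (hp _ _ hadj ha)

theorem apply_mul_lt_mul_apply_of_strictMonoOn_div {ω : ℝ → ℝ}
    (hω : StrictMonoOn (fun s => ω s / s) (Set.Ioc 0 1)) {κ s : ℝ} (hκ0 : 0 < κ) (hκ1 : κ < 1)
    (hs : s ∈ Set.Ioc 0 1) : ω (κ * s) < κ * ω s := by
  have hκs : 0 < κ * s := mul_pos hκ0 hs.1
  have h := hω ⟨hκs, by nlinarith [hs.2]⟩ hs (mul_lt_of_lt_one_left hs.1 hκ1)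
  rw [div_lt_div_iff₀ hκs hs.1] at h
  nlinarith [hs.1]

theorem HasDerivAt.eventually_lt_of_pos {φ : ℝ → ℝ} {c x : ℝ} (h : HasDerivAt φ c x)
    (hc : 0 < c) : ∀ᶠ t in nhdsWithin x (Set.Ioi x), φ x < φ t := by
  filter_upwards [(h.tendsto_slope.mono_left (nhdsGT_le_nhdsNE x)).eventually
    (eventually_gt_nhds hc), self_mem_nhdsWithin] with t hslope hxt
  exact (slope_pos_iff_of_le (le_of_lt hxt)).1 hslope

theorem abs_smul_abs_le_mulVec_abs {ι : Type*} [Fintype ι] {A : Matrix ι ι ℝ}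
    (hA : ∀ i j, 0 ≤ A i j) {μ : ℝ} {w : ι → ℝ} (hw : A *ᵥ w = μ • w) : |μ| • |w| ≤ A *ᵥ |w| :=
  fun i => calc |μ| * |w i| = |(A *ᵥ w) i| := by rw [hw, Pi.smul_apply, smul_eq_mul, abs_mul]
    _ ≤ ∑ j, |A i j * w j| := abs_sum_le_sum_abs _ _
    _ = (A *ᵥ |w|) i := by simp [mulVec, dotProduct, abs_mul, abs_of_nonneg (hA i _)]

theorem Matrix.IsHermitian.exists_mulVec_eq_lamMax_smul {n : ℕ} [Nonempty (Fin n)]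
    {A : Matrix (Fin n) (Fin n) ℝ} (hA : A.IsHermitian) : ∃ w ≠ 0, A *ᵥ w = lamMax A • w := by
  obtain ⟨j, hj⟩ : lamMax A ∈ Set.range hA.eigenvalues := by
    rw [lamMax, hA.spectrum_real_eq_range_eigenvalues]
    exact (Set.range_nonempty _).csSup_mem (Set.finite_range _)
  refine ⟨hA.eigenvectorBasis j, fun h => hA.eigenvectorBasis.orthonormal.ne_zero j ?_, ?_⟩
  · ext i; exact congrFun h i
  · rw [← hj]; exact hA.mulVec_eigenvectorBasis j

theorem Matrix.IsHermitian.exists_abs_lamMax_smul_le_mulVec {n : ℕ} [Nonempty (Fin n)]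
    {A : Matrix (Fin n) (Fin n) ℝ} (hA : A.IsHermitian) (hA0 : ∀ i j, 0 ≤ A i j) :
    ∃ u ∈ Set.Icc (0 : Fin n → ℝ) 1, u ≠ 0 ∧ |lamMax A| • u ≤ A *ᵥ u := by
  obtain ⟨w, hw0, hw⟩ := hA.exists_mulVec_eq_lamMax_smul
  have hc : 0 < ‖w‖⁻¹ := inv_pos.2 (norm_pos_iff.2 hw0)
  refine ⟨‖w‖⁻¹ • |w|, ⟨smul_nonneg hc.le (abs_nonneg w), fun i => ?_⟩,
    smul_ne_zero hc.ne' (mt (Pi.abs_eq_zero w).1 hw0), ?_⟩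
  · simpa [inv_mul_le_iff₀ (norm_pos_iff.2 hw0)] using norm_le_pi_norm w i
  · rw [smul_comm, mulVec_smul]
    exact smul_le_smul_of_nonneg_left (abs_smul_abs_le_mulVec_abs hA0 hw) hc.le

theorem Matrix.IsHermitian.exists_nonneg_mul_lt_apply {n : ℕ} [Nonempty (Fin n)]
    {A : Matrix (Fin n) (Fin n) ℝ} (hA : A.IsHermitian) (hA0 : ∀ i j, 0 ≤ A i j) {β δ : ℝ}
    (hβ : 0 ≤ β) (hδ : δ < β * lamMax A) {L : Fin n → (Fin n → ℝ) →L[ℝ] ℝ}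
    (hL : ∀ i j, L i (Pi.single j 1) = β * A i j) :
    ∃ u ∈ Set.Icc (0 : Fin n → ℝ) 1, u ≠ 0 ∧ ∀ i, 0 < u i → δ * u i < L i u := by
  obtain ⟨u, hu, hu0, hAu⟩ := hA.exists_abs_lamMax_smul_le_mulVec hA0
  refine ⟨u, hu, hu0, fun i hui => ?_⟩
  calc δ * u i < β * lamMax A * u i := mul_lt_mul_of_pos_right hδ hui
    _ ≤ β * (|lamMax A| * u i) := by
      rw [mul_assoc]; gcongr; exact le_abs_self _
    _ ≤ β * (A *ᵥ u) i := mul_le_mul_of_nonneg_left (hAu i) hβ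
    _ = L i u := by
      simp only [(L i).apply_eq_sum_smul_apply_single u, hL, smul_eq_mul, mulVec, dotProduct,
        mul_sum]
      exact sum_congr rfl fun j _ => by ring

section Solutions

variable {V : Type*} {Ξ : (V → ℝ) → V → ℝ} {ω : ℝ → ℝ}

theorem exists_solution_ge_of_subsolution (hmap : Set.MapsTo Ξ (Set.Icc 0 1) (Set.Icc 0 1))
    (hmono : MonotoneOn Ξ (Set.Icc 0 1)) (hωcont : ContinuousOn ω (Set.Icc 0 1))
    (hωmono : StrictMonoOn ω (Set.Icc 0 1)) (hω0 : ω 0 = 0) (hω1 : 1 ≤ ω 1) {a : V → ℝ}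
    (ha : a ∈ Set.Icc 0 1) (hsub : ∀ i, ω (a i) ≤ Ξ a i) :
    ∃ x ∈ Set.Icc a 1, ∀ i, Ξ x i = ω (x i) := by
  have hsurj : Set.Icc (0 : ℝ) 1 ⊆ ω '' Set.Icc 0 1 := by
    simpa [hω0] using (Set.Icc_subset_Icc_right hω1).trans
      (intermediate_value_Icc zero_le_one hωcont)
  set T : (V → ℝ) → V → ℝ := fun x i => Function.invFunOn ω (Set.Icc 0 1) (Ξ x i)
  have hT {x} (hx : x ∈ Set.Icc 0 1) (i : V) : T x i ∈ Set.Icc 0 1 ∧ ω (T x i) = Ξ x i :=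
    have hΞ : Ξ x i ∈ ω '' Set.Icc 0 1 := hsurj ⟨(hmap hx).1 i, (hmap hx).2 i⟩
    ⟨Function.invFunOn_mem hΞ, Function.invFunOn_eq hΞ⟩
  have hTle {x y} (hx : x ∈ Set.Icc 0 1) (hy : y ∈ Set.Icc 0 1) (hxy : Ξ x ≤ Ξ y) : T x ≤ T y :=
    fun i => (hωmono.le_iff_le (hT hx i).1 (hT hy i).1).1 <| by
      rw [(hT hx i).2, (hT hy i).2]; exact hxy i
  have hcube {x} (hx : x ∈ Set.Icc a 1) : x ∈ Set.Icc 0 1 := ⟨ha.1.trans hx.1, hx.2⟩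
  have haT : a ≤ T a := fun i => (hωmono.le_iff_le ⟨ha.1 i, ha.2 i⟩ (hT ha i).1).1 <| by
    rw [(hT ha i).2]; exact hsub i
  obtain ⟨x, hx, hfix⟩ := exists_fixedPoint_of_monotoneOn_Icc ha.2
    (fun x hx y hy hxy => hTle (hcube hx) (hcube hy) (hmono (hcube hx) (hcube hy) hxy))
    fun x hx => ⟨haT.trans (hTle ha (hcube hx) (hmono ha (hcube hx) hx.1)),
      fun i => (hT (hcube hx) i).1.2⟩
  exact ⟨x, hx, fun i => by rw [← (hT (hcube hx) i).2, hfix]⟩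

theorem pos_of_solution {G : SimpleGraph V} (hG : G.Connected)
    (hedge : ∀ x ∈ Set.Icc 0 1, ∀ a b, G.Adj a b → 0 < x a → 0 < Ξ x b) (hω0 : ω 0 = 0)
    {x : V → ℝ} (hx : x ∈ Set.Icc 0 1) (hx0 : x ≠ 0) (hsol : ∀ i, Ξ x i = ω (x i)) (i : V) :
    0 < x i := by
  refine hG.forall_of_adj_imp (p := fun j => 0 < x j) (fun a b hab hxa => ?_) ?_ i
  · have h := hedge x hx a b hab hxa
    rw [hsol] at h
    exact (hx.1 b).lt_of_ne fun h0 => by simp [← h0, hω0] at h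
  · obtain ⟨a, ha⟩ := Function.ne_iff.1 hx0
    exact ⟨a, (hx.1 a).lt_of_ne' ha⟩

theorem le_of_pos_solutions [Finite V] (hmono : MonotoneOn Ξ (Set.Icc 0 1))
    (hconc : ∀ y ∈ Set.Icc 0 1, ∀ κ ∈ Set.Icc (0 : ℝ) 1, κ • Ξ y ≤ Ξ (κ • y))
    (hωdiv : StrictMonoOn (fun s => ω s / s) (Set.Ioc 0 1)) {x y : V → ℝ}
    (hx : x ∈ Set.Icc 0 1) (hy : y ∈ Set.Icc 0 1) (hxsol : ∀ i, Ξ x i = ω (x i))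
    (hysol : ∀ i, Ξ y i = ω (y i)) (hxpos : ∀ i, 0 < x i) (hypos : ∀ i, 0 < y i) : y ≤ x := by
  by_contra hyx
  obtain ⟨i, hi⟩ : ∃ i, x i < y i := by simpa [Pi.le_def] using hyx
  have : Nonempty V := ⟨i⟩
  obtain ⟨i₀, hi₀⟩ := Finite.exists_min fun j => x j / y j
  set κ := x i₀ / y i₀
  have hκ0 : 0 < κ := div_pos (hxpos i₀) (hypos i₀)
  have hκ1 : κ < 1 := (hi₀ i).trans_lt ((div_lt_one (hypos i)).2 hi)
  have hκy : κ • y ≤ x := fun j => (le_div_iff₀ (hypos j)).1 (hi₀ j)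
  have hκy_mem : κ • y ∈ Set.Icc 0 1 := ⟨smul_nonneg hκ0.le hy.1, hκy.trans hx.2⟩
  have hxi₀ : x i₀ = κ * y i₀ := (div_mul_cancel₀ _ (hypos i₀).ne').symm
  have := calc Ξ (κ • y) i₀ ≤ Ξ x i₀ := hmono hκy_mem hx hκy i₀
    _ = ω (κ * y i₀) := by rw [hxsol, hxi₀]
    _ < κ * ω (y i₀) :=
      apply_mul_lt_mul_apply_of_strictMonoOn_div hωdiv hκ0 hκ1 ⟨hypos i₀, hy.2 i₀⟩
    _ = (κ • Ξ y) i₀ := by rw [← hysol]; rfl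
    _ ≤ Ξ (κ • y) i₀ := hconc y hy κ ⟨hκ0.le, hκ1.le⟩ i₀
  exact this.false

end Solutions

theorem exists_subsolution_of_linearization {ι : Type*} [Fintype ι] {Ξ : (ι → ℝ) → ι → ℝ}
    {ω : ℝ → ℝ} {δ : ℝ} {u : ι → ℝ} (hΞ : ∀ i, DifferentiableAt ℝ (fun y => Ξ y i) 0)
    (hΞ0 : Ξ 0 = 0) (hΞnn : ∀ x ∈ Set.Icc 0 1, 0 ≤ Ξ x) (hω : HasDerivAt ω δ 0) (hω0 : ω 0 = 0)
    (hu : u ∈ Set.Icc 0 1) (hu0 : u ≠ 0)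
    (hlin : ∀ i, 0 < u i → δ * u i < fderiv ℝ (fun y => Ξ y i) 0 u) :
    ∃ a ∈ Set.Icc 0 1, a ≠ 0 ∧ ∀ i, ω (a i) ≤ Ξ a i := by
  have hmem {t : ℝ} (ht : t ∈ Set.Ioo 0 1) : t • u ∈ Set.Icc 0 1 :=
    ⟨smul_nonneg ht.1.le hu.1, fun i => mul_le_one₀ ht.2.le (hu.1 i) (hu.2 i)⟩
  have hev (i : ι) : ∀ᶠ t in nhdsWithin 0 (Set.Ioi 0), ω (t * u i) ≤ Ξ (t • u) i := by
    rcases (hu.1 i).eq_or_lt with hui | hui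
    · filter_upwards [Ioo_mem_nhdsGT one_pos] with t ht
      simpa [← hui, hω0] using hΞnn _ (hmem ht) i
    · have hΞu : HasDerivAt (fun t : ℝ => Ξ (t • u) i) (fderiv ℝ (fun y => Ξ y i) 0 u) 0 := by
        simpa using DifferentiableAt.hasDerivAt_comp_add_smul (x := 0) (d := u) (t := 0)
          (by simpa using hΞ i)
      have hωu : HasDerivAt (fun t : ℝ => ω (t * u i)) (δ * u i) 0 := by
        simpa using (zero_mul (u i) ▸ hω).comp 0 (hasDerivAt_mul_const (u i))
      filter_upwards [(hΞu.sub hωu).eventually_lt_of_pos (sub_pos.2 (hlin i hui))] with t ht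
      simpa [hΞ0, hω0] using ht.le
  obtain ⟨t, hsub, ht⟩ := ((Filter.eventually_all.2 hev).and (Ioo_mem_nhdsGT one_pos)).exists
  exact ⟨t • u, hmem ht, smul_ne_zero ht.1.ne' hu0, hsub⟩

theorem existsUnique_nonzero_solution {V : Type*} [Finite V] {G : SimpleGraph V}
    (hG : G.Connected) {Ξ : (V → ℝ) → V → ℝ} {ω : ℝ → ℝ}
    (hmap : Set.MapsTo Ξ (Set.Icc 0 1) (Set.Icc 0 1)) (hmono : MonotoneOn Ξ (Set.Icc 0 1))
    (hconc : ∀ y ∈ Set.Icc 0 1, ∀ κ ∈ Set.Icc (0 : ℝ) 1, κ • Ξ y ≤ Ξ (κ • y))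
    (hedge : ∀ x ∈ Set.Icc 0 1, ∀ a b, G.Adj a b → 0 < x a → 0 < Ξ x b)
    (hωcont : ContinuousOn ω (Set.Icc 0 1)) (hωmono : StrictMonoOn ω (Set.Icc 0 1))
    (hω0 : ω 0 = 0) (hω1 : 1 ≤ ω 1) (hωdiv : StrictMonoOn (fun s => ω s / s) (Set.Ioc 0 1))
    {a : V → ℝ} (ha : a ∈ Set.Icc 0 1) (ha0 : a ≠ 0) (hsub : ∀ i, ω (a i) ≤ Ξ a i) :
    ∃! x, x ∈ Set.Icc 0 1 ∧ x ≠ 0 ∧ ∀ i, Ξ x i = ω (x i) := by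
  obtain ⟨x, hxa, hxsol⟩ :=
    exists_solution_ge_of_subsolution hmap hmono hωcont hωmono hω0 hω1 ha hsub
  have hx : x ∈ Set.Icc 0 1 := ⟨ha.1.trans hxa.1, hxa.2⟩
  have hx0 : x ≠ 0 := fun h => ha0 (le_antisymm (h ▸ hxa.1) ha.1)
  have hxpos := pos_of_solution hG hedge hω0 hx hx0 hxsol
  refine ⟨x, ⟨hx, hx0, hxsol⟩, fun y ⟨hy, hy0, hysol⟩ => ?_⟩
  have hypos := pos_of_solution hG hedge hω0 hy hy0 hysol
  exact le_antisymm (le_of_pos_solutions hmono hconc hωdiv hx hy hxsol hysol hxpos hypos)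
    (le_of_pos_solutions hmono hconc hωdiv hy hx hysol hxsol hypos hxpos)

theorem stmt2_general {n : ℕ} (hn : 1 ≤ n) (G : SimpleGraph (Fin n)) [DecidableRel G.Adj]
    (hG : G.Connected) (β δ : ℝ) (hβ : β ∈ Set.Ioo (0 : ℝ) 1) (hδ : δ ∈ Set.Ioo (0 : ℝ) 1)
    (hthr : 1 < β * lamMax (G.adjMatrix ℝ) / δ)
    (Ξ : (Fin n → ℝ) → Fin n → ℝ)
    (hmap : ∀ x ∈ Set.Icc (0 : Fin n → ℝ) 1, Ξ x ∈ Set.Icc (0 : Fin n → ℝ) 1)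
    (hC2 : ContDiff ℝ 2 Ξ)
    -- (a)
    (ha0 : Ξ 0 = 0)
    (ha1 : ∀ i j, fderiv ℝ (fun y => Ξ y i) 0 (Pi.single j 1) = β * G.adjMatrix ℝ i j)
    -- (b)
    (hb_pos : ∀ x ∈ Set.Icc (0 : Fin n → ℝ) 1, ∀ i j, G.Adj j i →
      0 < fderiv ℝ (fun y => Ξ y i) x (Pi.single j 1))
    (hb_zero : ∀ x ∈ Set.Icc (0 : Fin n → ℝ) 1, ∀ i j, ¬ G.Adj j i →
      fderiv ℝ (fun y => Ξ y i) x (Pi.single j 1) = 0)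
    -- (c)
    (hc : ∀ x ∈ Set.Icc (0 : Fin n → ℝ) 1, ∀ i j k,
      fderiv ℝ (fun y => fderiv ℝ (fun z => Ξ z i) y (Pi.single k 1)) x (Pi.single j 1) ≤ 0)
    (ω : ℝ → ℝ)
    (hωdiff : ∀ s ∈ Set.Icc (0 : ℝ) 1, DifferentiableAt ℝ ω s)
    -- (d)
    (hd0 : ω 0 = 0) (hd1 : 1 ≤ ω 1)
    -- (e)
    (he0 : deriv ω 0 = δ) (he : ∀ s ∈ Set.Ioo (0 : ℝ) 1, 0 < deriv ω s)
    -- (f)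
    (hf : ∀ s₁ s₂ : ℝ, 0 < s₁ → s₁ < s₂ → s₂ ≤ 1 → ω s₁ / s₁ < ω s₂ / s₂) :
    ∃! x : Fin n → ℝ, x ∈ Set.Icc (0 : Fin n → ℝ) 1 ∧ x ≠ 0 ∧
      ∀ i, Ξ x i - ω (x i) = 0 := by
  have : Nonempty (Fin n) := Fin.pos_iff_nonempty.mp hn
  have h0 : (0 : Fin n → ℝ) ∈ Set.Icc 0 1 := Set.left_mem_Icc.2 zero_le_one
  have hΞ (i : Fin n) : ContDiff ℝ 2 fun y => Ξ y i := contDiff_pi.1 hC2 i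
  have hdiff (i : Fin n) : Differentiable ℝ fun y => Ξ y i := (hΞ i).differentiable two_ne_zero
  have hpartial : ∀ x ∈ Set.Icc (0 : Fin n → ℝ) 1, ∀ i j,
      0 ≤ fderiv ℝ (fun y => Ξ y i) x (Pi.single j 1) := fun x hx i j =>
    if h : G.Adj j i then (hb_pos x hx i j h).le else (hb_zero x hx i j h).ge
  have hωcont : ContinuousOn ω (Set.Icc 0 1) :=
    fun s hs => (hωdiff s hs).continuousAt.continuousWithinAt
  obtain ⟨u, hu, hu0, hlin⟩ := (G.isHermitian_adjMatrix ℝ).exists_nonneg_mul_lt_apply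
    (fun i j => by by_cases h : G.Adj i j <;> simp [h]) hβ.1.le
    (by rwa [lt_div_iff₀ hδ.1, one_mul] at hthr) (L := fun i => fderiv ℝ (fun y => Ξ y i) 0) ha1
  obtain ⟨a, ha, ha_ne, hsub⟩ := exists_subsolution_of_linearization (fun i => hdiff i 0) ha0
    (fun x hx => (hmap x hx).1) (he0 ▸ (hωdiff 0 (Set.left_mem_Icc.2 zero_le_one)).hasDerivAt)
    hd0 hu hu0 hlin
  have hmono : MonotoneOn Ξ (Set.Icc 0 1) := fun x hx y hy hxy i =>
    monotoneOn_of_partial_nonneg (convex_Icc 0 1) (hdiff i) (hpartial · · i) hx hy hxy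
  have hconc : ∀ y ∈ Set.Icc 0 1, ∀ κ ∈ Set.Icc (0 : ℝ) 1, κ • Ξ y ≤ Ξ (κ • y) :=
    fun y hy κ hκ i => mul_le_apply_smul_of_second_partial_nonpos (convex_Icc 0 1) (hΞ i)
      (hc · · i) h0 (congrFun ha0 i) hy hy.1 hκ
  have hedge : ∀ x ∈ Set.Icc 0 1, ∀ a b, G.Adj a b → 0 < x a → 0 < Ξ x b :=
    fun x hx a b hab hxa => by
      simpa [ha0] using lt_of_partial_pos (convex_Icc 0 1) (hdiff b) (hpartial · · b)
        (hb_pos · · b a hab) h0 hx hx.1 hxa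
  simpa only [sub_eq_zero] using existsUnique_nonzero_solution hG hmap hmono hconc hedge hωcont
    (strictMonoOn_of_deriv_pos (convex_Icc 0 1) hωcont (by rwa [interior_Icc])) hd0 hd1
    (fun s₁ hs₁ s₂ hs₂ h => hf s₁ s₂ hs₁.1 h hs₂.2) ha ha_ne hsub

/-- Under conditions (a)–(c) on `Ξ` and (d)–(f) on `ω`, if
`β λmax(A) / δ > 1` then `Ψ(x) = Ξ(x) − ω(x_i)` has exactly one zero in `[0,1]^n` other
than the origin. -/
theorem stmt2 {n : ℕ} (hn : 1 ≤ n) (G : SimpleGraph (Fin n)) [DecidableRel G.Adj]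
    (hG : G.Connected) (β δ : ℝ) (hβ : β ∈ Set.Ioo (0 : ℝ) 1) (hδ : δ ∈ Set.Ioo (0 : ℝ) 1)
    (hthr : 1 < β * lamMax (G.adjMatrix ℝ) / δ)
    (Ξ : (Fin n → ℝ) → Fin n → ℝ)
    (hmap : ∀ x ∈ Set.Icc (0 : Fin n → ℝ) 1, Ξ x ∈ Set.Icc (0 : Fin n → ℝ) 1)
    (hC2 : ContDiff ℝ 2 Ξ)
    -- (a)
    (ha0 : Ξ 0 = 0)
    (ha1 : ∀ i j, fderiv ℝ (fun y => Ξ y i) 0 (Pi.single j 1) = β * G.adjMatrix ℝ i j)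
    -- (b)
    (hb_pos : ∀ x ∈ Set.Icc (0 : Fin n → ℝ) 1, ∀ i j, G.Adj j i →
      0 < fderiv ℝ (fun y => Ξ y i) x (Pi.single j 1))
    (hb_zero : ∀ x ∈ Set.Icc (0 : Fin n → ℝ) 1, ∀ i j, ¬ G.Adj j i →
      fderiv ℝ (fun y => Ξ y i) x (Pi.single j 1) = 0)
    -- (c)
    (hc : ∀ x ∈ Set.Icc (0 : Fin n → ℝ) 1, ∀ i j k,
      fderiv ℝ (fun y => fderiv ℝ (fun z => Ξ z i) y (Pi.single k 1)) x (Pi.single j 1) ≤ 0)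
    (ω : ℝ → ℝ)
    (hωnn : ∀ s ∈ Set.Icc (0 : ℝ) 1, 0 ≤ ω s)
    (hωdiff : ∀ s ∈ Set.Icc (0 : ℝ) 1, DifferentiableAt ℝ ω s)
    -- (d)
    (hd0 : ω 0 = 0) (hd1 : 1 ≤ ω 1)
    -- (e)
    (he0 : deriv ω 0 = δ) (he : ∀ s ∈ Set.Ioo (0 : ℝ) 1, 0 < deriv ω s)
    -- (f)
    (hf : ∀ s₁ s₂ : ℝ, 0 < s₁ → s₁ < s₂ → s₂ ≤ 1 → ω s₁ / s₁ < ω s₂ / s₂) :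
    ∃! x : Fin n → ℝ, x ∈ Set.Icc (0 : Fin n → ℝ) 1 ∧ x ≠ 0 ∧
      ∀ i, Ξ x i - ω (x i) = 0 :=
  stmt2_general hn G hG β δ hβ hδ hthr Ξ hmap hC2 ha0 ha1 hb_pos hb_zero hc ω hωdiff hd0 hd1 he0 he
    hf
end

section
/- Suppose βλmax(A)/δ > 1 (equivalently, λmax((1−δ)I_n + βA) > 1). Then the SIS nonlinear map Φ has a unique fixed point x* in [0,1]^n other than the origin, and for every initial point P(0) ∈ [0,1]^n with P(0) ≠ 0 the iterates P(t) = Φ^t(P(0)) converge to x* as t → ∞. -/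
open Matrix Finset

lemma exists_eigvec {n : ℕ} (hn : 1 ≤ n) (A : Matrix (Fin n) (Fin n) ℝ)
    (hA : A.IsHermitian) :
    ∃ v : Fin n → ℝ, v ≠ 0 ∧ A *ᵥ v = lamMax A • v ∧ ∀ μ ∈ spectrum ℝ A, μ ≤ lamMax A := by
  classical
  have e := Matrix.toLinAlgEquiv (Pi.basisFun ℝ (Fin n))
  set f : Module.End ℝ (Fin n → ℝ) := Matrix.toLin' A with hf
  have hspec : spectrum ℝ A = spectrum ℝ f := by
    rw [hf, ← Matrix.toLin_eq_toLin']
    exact (AlgEquiv.spectrum_eq (Matrix.toLinAlgEquiv (Pi.basisFun ℝ (Fin n))) A).symm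
  have hmem : ∀ μ : ℝ, μ ∈ spectrum ℝ A ↔ f.HasEigenvalue μ := by
    intro μ
    rw [hspec, Module.End.hasEigenvalue_iff_mem_spectrum]
  have hfin : (spectrum ℝ A).Finite := by
    apply Set.Finite.subset (Polynomial.finite_setOf_isRoot (minpoly.ne_zero_of_finite ℝ f))
    intro μ hμ
    exact (Module.End.hasEigenvalue_iff_isRoot).1 ((hmem μ).1 hμ)
  have hne : (spectrum ℝ A).Nonempty :=
    ⟨hA.eigenvalues ⟨0, hn⟩, hA.eigenvalues_mem_spectrum_real ⟨0, hn⟩⟩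
  have hsup : lamMax A ∈ spectrum ℝ A := Set.Nonempty.csSup_mem hne hfin
  have hub : ∀ μ ∈ spectrum ℝ A, μ ≤ lamMax A := fun μ hμ =>
    le_csSup hfin.bddAbove hμ
  have hev : f.HasEigenvalue (lamMax A) := (hmem _).1 hsup
  obtain ⟨v, hv⟩ := hev.exists_hasEigenvector
  exact ⟨v, hv.2, by simpa [hf, Matrix.toLin'_apply] using hv.apply_eq_smul, hub⟩


-- products of numbers in [0,1]
lemma prod_mem_Icc {ι : Type*} (s : Finset ι) (a : ι → ℝ)
    (h0 : ∀ i ∈ s, 0 ≤ a i) (h1 : ∀ i ∈ s, a i ≤ 1) :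
    (∏ i ∈ s, a i) ∈ Set.Icc (0:ℝ) 1 :=
  ⟨Finset.prod_nonneg h0, Finset.prod_le_one h0 h1⟩

-- Weierstrass-type: ∏(1-a_i) ≤ 1 - S + S²/2
lemma prod_one_sub_le {ι : Type*} (s : Finset ι) (a : ι → ℝ)
    (h0 : ∀ i ∈ s, 0 ≤ a i) (h1 : ∀ i ∈ s, a i ≤ 1) :
    ∏ i ∈ s, (1 - a i) ≤ 1 - (∑ i ∈ s, a i) + (∑ i ∈ s, a i)^2 / 2 := by
  classical
  induction s using Finset.induction_on with
  | empty => simp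
  | @insert x s hxs ih =>
    rw [Finset.prod_insert hxs, Finset.sum_insert hxs]
    have h0' : ∀ i ∈ s, 0 ≤ a i := fun i hi => h0 i (Finset.mem_insert_of_mem hi)
    have h1' : ∀ i ∈ s, a i ≤ 1 := fun i hi => h1 i (Finset.mem_insert_of_mem hi)
    have hP := ih h0' h1'
    set S := ∑ i ∈ s, a i with hS
    have hSnn : 0 ≤ S := Finset.sum_nonneg h0'
    have hax : 0 ≤ a x := h0 x (Finset.mem_insert_self x s)
    have hax1 : a x ≤ 1 := h1 x (Finset.mem_insert_self x s)
    have h1ax : 0 ≤ 1 - a x := by linarith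
    calc (1 - a x) * ∏ i ∈ s, (1 - a i) ≤ (1 - a x) * (1 - S + S^2/2) := by
          apply mul_le_mul_of_nonneg_left hP h1ax
      _ ≤ 1 - (a x + S) + (a x + S)^2 / 2 := by nlinarith [sq_nonneg (a x), sq_nonneg S, mul_nonneg hax hSnn, mul_nonneg (mul_nonneg hax hSnn) hSnn]

-- concavity: 1-∏(1-c a_j) ≥ c (1-∏(1-a_j)), with P ≥ Q auxiliary
lemma prod_subhomog {ι : Type*} (s : Finset ι) (a : ι → ℝ) (c : ℝ)
    (hc0 : 0 ≤ c) (hc1 : c ≤ 1)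
    (h0 : ∀ i ∈ s, 0 ≤ a i) (h1 : ∀ i ∈ s, a i ≤ 1) :
    c * (1 - ∏ i ∈ s, (1 - a i)) ≤ 1 - ∏ i ∈ s, (1 - c * a i) := by
  classical
  induction s using Finset.induction_on with
  | empty => simp
  | @insert x s hxs ih =>
    have h0' : ∀ i ∈ s, 0 ≤ a i := fun i hi => h0 i (Finset.mem_insert_of_mem hi)
    have h1' : ∀ i ∈ s, a i ≤ 1 := fun i hi => h1 i (Finset.mem_insert_of_mem hi)
    have hax : 0 ≤ a x := h0 x (Finset.mem_insert_self x s)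
    have hax1 : a x ≤ 1 := h1 x (Finset.mem_insert_self x s)
    have hP : ∏ i ∈ s, (1 - a i) ≤ ∏ i ∈ s, (1 - c * a i) := by
      apply Finset.prod_le_prod (fun i hi => by linarith [h0' i hi, h1' i hi])
        (fun i hi => by nlinarith [h0' i hi, h1' i hi])
    have hQ0 : 0 ≤ ∏ i ∈ s, (1 - a i) :=
      Finset.prod_nonneg (fun i hi => by linarith [h1' i hi])
    have hih := ih h0' h1'
    rw [Finset.prod_insert hxs, Finset.prod_insert hxs]
    set P := ∏ i ∈ s, (1 - c * a i)
    set Q := ∏ i ∈ s, (1 - a i)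
    nlinarith [mul_nonneg (mul_nonneg hc0 hax) (hP.trans' hQ0), mul_nonneg hc0 hax]


section E
variable {n : ℕ} (G : SimpleGraph (Fin n)) [DecidableRel G.Adj] {β δ : ℝ}

lemma g_mem (hβ0 : 0 < β) (hβ1 : β < 1) {x : Fin n → ℝ} (hx0 : ∀ j, 0 ≤ x j)
    (hx1 : ∀ j, x j ≤ 1) (i : Fin n) :
    (1 - ∏ j ∈ G.neighborFinset i, (1 - β * x j)) ∈ Set.Icc (0:ℝ) 1 := by
  have h0 : ∀ j ∈ G.neighborFinset i, (0:ℝ) ≤ 1 - β * x j := fun j _ => by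
    nlinarith [hx0 j, hx1 j]
  have h1 : ∀ j ∈ G.neighborFinset i, (1 - β * x j) ≤ 1 := fun j _ => by
    nlinarith [hx0 j]
  exact ⟨by linarith [Finset.prod_le_one h0 h1], by linarith [Finset.prod_nonneg h0]⟩

lemma phi_lb_self (hβ0 : 0 < β) (hβ1 : β < 1) (hδ0 : 0 < δ) (hδ1 : δ < 1)
    {x : Fin n → ℝ} (hx0 : ∀ j, 0 ≤ x j) (hx1 : ∀ j, x j ≤ 1) (i : Fin n) :
    (1 - δ) * x i ≤ sisPhi G β δ x i := by
  obtain ⟨hg0, hg1⟩ := g_mem G hβ0 hβ1 hx0 hx1 i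
  have : 0 ≤ 1 - (1-δ) * x i := by nlinarith [hx0 i, hx1 i]
  unfold sisPhi
  nlinarith [mul_nonneg this hg0]

lemma phi_lb_neighbor (hβ0 : 0 < β) (hβ1 : β < 1) (hδ0 : 0 < δ) (hδ1 : δ < 1)
    {x : Fin n → ℝ} (hx0 : ∀ j, 0 ≤ x j) (hx1 : ∀ j, x j ≤ 1) {i j : Fin n}
    (hij : G.Adj i j) :
    δ * (β * x j) ≤ sisPhi G β δ x i := by
  have hjmem : j ∈ G.neighborFinset i := (G.mem_neighborFinset i j).2 hij
  have hfac : ∀ k ∈ G.neighborFinset i, (0:ℝ) ≤ 1 - β * x k := fun k _ => by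
    nlinarith [hx0 k, hx1 k]
  have hfac1 : ∀ k ∈ G.neighborFinset i, (1 - β * x k) ≤ 1 := fun k _ => by
    nlinarith [hx0 k]
  have hprod : ∏ k ∈ G.neighborFinset i, (1 - β * x k) ≤ 1 - β * x j := by
    rw [Finset.prod_eq_mul_prod_sdiff_singleton_of_mem hjmem]
    have hd0 : (0:ℝ) ≤ ∏ k ∈ G.neighborFinset i \ {j}, (1 - β * x k) :=
      Finset.prod_nonneg (fun k hk => hfac k (Finset.sdiff_subset hk))
    have hd1 : ∏ k ∈ G.neighborFinset i \ {j}, (1 - β * x k) ≤ 1 :=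
      Finset.prod_le_one (fun k hk => hfac k (Finset.sdiff_subset hk))
        (fun k hk => hfac1 k (Finset.sdiff_subset hk))
    nlinarith [hfac j hjmem]
  have hxi : 0 ≤ (1 - δ) * x i := mul_nonneg (by linarith) (hx0 i)
  have h1 : δ ≤ 1 - (1-δ) * x i := by nlinarith [hx0 i, hx1 i]
  have hg : β * x j ≤ 1 - ∏ k ∈ G.neighborFinset i, (1 - β * x k) := by linarith
  have hg0 : 0 ≤ β * x j := mul_nonneg hβ0.le (hx0 j)
  unfold sisPhi
  nlinarith [mul_le_mul h1 hg hg0 (by linarith : (0:ℝ) ≤ 1 - (1-δ) * x i)]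

lemma phi_mem (hβ0 : 0 < β) (hβ1 : β < 1) (hδ0 : 0 < δ) (hδ1 : δ < 1)
    {x : Fin n → ℝ} (hx0 : ∀ j, 0 ≤ x j) (hx1 : ∀ j, x j ≤ 1) (i : Fin n) :
    sisPhi G β δ x i ∈ Set.Icc (0:ℝ) 1 := by
  obtain ⟨hg0, hg1⟩ := g_mem G hβ0 hβ1 hx0 hx1 i
  unfold sisPhi
  have h1 : 0 ≤ (1 - δ) * x i := mul_nonneg (by linarith) (hx0 i)
  have h2 : (1 - δ) * x i ≤ 1 := by nlinarith [hx0 i, hx1 i]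
  exact ⟨by nlinarith, by nlinarith⟩

lemma phi_mono (hβ0 : 0 < β) (hβ1 : β < 1) (hδ0 : 0 < δ) (hδ1 : δ < 1)
    {x y : Fin n → ℝ} (hx0 : ∀ j, 0 ≤ x j)
    (hy1 : ∀ j, y j ≤ 1) (hxy : ∀ j, x j ≤ y j) (i : Fin n) :
    sisPhi G β δ x i ≤ sisPhi G β δ y i := by
  have hx1 : ∀ j, x j ≤ 1 := fun j => (hxy j).trans (hy1 j)
  have hy0 : ∀ j, 0 ≤ y j := fun j => (hx0 j).trans (hxy j)
  obtain ⟨hgx0, hgx1⟩ := g_mem G hβ0 hβ1 hx0 hx1 i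
  obtain ⟨hgy0, hgy1⟩ := g_mem G hβ0 hβ1 hy0 hy1 i
  have hprod : ∏ j ∈ G.neighborFinset i, (1 - β * y j) ≤
      ∏ j ∈ G.neighborFinset i, (1 - β * x j) := by
    apply Finset.prod_le_prod (fun j _ => by nlinarith [hy0 j, hy1 j])
      (fun j _ => by nlinarith [hxy j])
  unfold sisPhi
  have hax : (1-δ) * x i ≤ (1-δ) * y i := mul_le_mul_of_nonneg_left (hxy i) (by linarith)
  have hay1 : (1-δ) * y i ≤ 1 := by nlinarith [hy0 i, hy1 i]
  nlinarith [mul_le_mul_of_nonneg_left (sub_le_sub_left hprod 1) (sub_nonneg.2 hay1)]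

lemma phi_cont : Continuous (sisPhi G β δ) := by
  unfold sisPhi
  exact continuous_pi fun i => by fun_prop

-- iterates stay in the box
lemma iter_mem (hβ0 : 0 < β) (hβ1 : β < 1) (hδ0 : 0 < δ) (hδ1 : δ < 1)
    {x : Fin n → ℝ} (hx0 : ∀ j, 0 ≤ x j) (hx1 : ∀ j, x j ≤ 1) (t : ℕ) :
    (∀ j, 0 ≤ (sisPhi G β δ)^[t] x j) ∧ (∀ j, (sisPhi G β δ)^[t] x j ≤ 1) := by
  induction t with
  | zero => exact ⟨hx0, hx1⟩
  | succ t ih =>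
    rw [Function.iterate_succ_apply']
    exact ⟨fun j => (phi_mem G hβ0 hβ1 hδ0 hδ1 ih.1 ih.2 j).1,
           fun j => (phi_mem G hβ0 hβ1 hδ0 hδ1 ih.1 ih.2 j).2⟩

lemma iter_mono (hβ0 : 0 < β) (hβ1 : β < 1) (hδ0 : 0 < δ) (hδ1 : δ < 1)
    {x y : Fin n → ℝ} (hx0 : ∀ j, 0 ≤ x j) (hx1 : ∀ j, x j ≤ 1)
    (hy0 : ∀ j, 0 ≤ y j) (hy1 : ∀ j, y j ≤ 1) (hxy : ∀ j, x j ≤ y j) (t : ℕ) (i : Fin n) :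
    (sisPhi G β δ)^[t] x i ≤ (sisPhi G β δ)^[t] y i := by
  induction t generalizing i with
  | zero => exact hxy i
  | succ t ih =>
    rw [Function.iterate_succ_apply', Function.iterate_succ_apply']
    exact phi_mono G hβ0 hβ1 hδ0 hδ1 (iter_mem G hβ0 hβ1 hδ0 hδ1 hx0 hx1 t).1
      (iter_mem G hβ0 hβ1 hδ0 hδ1 hy0 hy1 t).2 ih i

-- positivity spreads along walks
lemma spread (hβ0 : 0 < β) (hβ1 : β < 1) (hδ0 : 0 < δ) (hδ1 : δ < 1) :
    ∀ {j i : Fin n} (W : G.Walk j i) (p : Fin n → ℝ), (∀ k, 0 ≤ p k) → (∀ k, p k ≤ 1) →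
      0 < p j → 0 < (sisPhi G β δ)^[W.length] p i := by
  intro j i W
  induction W with
  | nil => intro p _ _ hpj; simpa using hpj
  | cons hadj W' ih =>
    intro p hp0 hp1 hpj
    rename_i a b c
    rw [SimpleGraph.Walk.length_cons]
    have hnext : 0 < sisPhi G β δ p b := by
      have := phi_lb_neighbor G hβ0 hβ1 hδ0 hδ1 hp0 hp1 hadj.symm
      nlinarith [mul_pos hδ0 (mul_pos hβ0 hpj)]
    have hmem := fun k => phi_mem G hβ0 hβ1 hδ0 hδ1 hp0 hp1 k
    have := ih (sisPhi G β δ p) (fun k => (hmem k).1) (fun k => (hmem k).2) hnext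
    rw [Function.iterate_succ_apply]
    exact this

-- positivity persists
lemma pos_persist (hβ0 : 0 < β) (hβ1 : β < 1) (hδ0 : 0 < δ) (hδ1 : δ < 1)
    {x : Fin n → ℝ} (hx0 : ∀ j, 0 ≤ x j) (hx1 : ∀ j, x j ≤ 1) {i : Fin n}
    {s t : ℕ} (hst : s ≤ t) (hpos : 0 < (sisPhi G β δ)^[s] x i) :
    0 < (sisPhi G β δ)^[t] x i := by
  induction t with
  | zero => simpa [Nat.le_zero.1 hst] using hpos
  | succ t ih =>
    rcases Nat.lt_or_ge s (t+1) with hlt | hge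
    · have h1 := ih (Nat.lt_succ_iff.1 hlt)
      rw [Function.iterate_succ_apply']
      have hm := iter_mem G hβ0 hβ1 hδ0 hδ1 hx0 hx1 t
      have := phi_lb_self G hβ0 hβ1 hδ0 hδ1 hm.1 hm.2 i
      nlinarith
    · have : s = t + 1 := le_antisymm hst hge
      subst this; exact hpos

end E


section F
variable {n : ℕ} (G : SimpleGraph (Fin n)) [DecidableRel G.Adj] {β δ : ℝ}

lemma tendsto_iter_of_incr (hβ0 : 0 < β) (hβ1 : β < 1) (hδ0 : 0 < δ) (hδ1 : δ < 1)
    {x : Fin n → ℝ} (hx0 : ∀ j, 0 ≤ x j) (hx1 : ∀ j, x j ≤ 1)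
    (hup : ∀ i, x i ≤ sisPhi G β δ x i) :
    ∃ L : Fin n → ℝ, (∀ j, 0 ≤ L j) ∧ (∀ j, L j ≤ 1) ∧ sisPhi G β δ L = L ∧
      (∀ i, x i ≤ L i) ∧
      Filter.Tendsto (fun t => (sisPhi G β δ)^[t] x) Filter.atTop (nhds L) := by
  have hΦx0 : ∀ j, 0 ≤ sisPhi G β δ x j := fun j => (phi_mem G hβ0 hβ1 hδ0 hδ1 hx0 hx1 j).1
  have hΦx1 : ∀ j, sisPhi G β δ x j ≤ 1 := fun j => (phi_mem G hβ0 hβ1 hδ0 hδ1 hx0 hx1 j).2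
  have hstep : ∀ t i, (sisPhi G β δ)^[t] x i ≤ (sisPhi G β δ)^[t+1] x i := by
    intro t i
    rw [Function.iterate_succ_apply]
    exact iter_mono G hβ0 hβ1 hδ0 hδ1 hx0 hx1 hΦx0 hΦx1 hup t i
  have hMono : ∀ i, Monotone (fun t => (sisPhi G β δ)^[t] x i) := fun i =>
    monotone_nat_of_le_succ (fun t => hstep t i)
  have hBdd : ∀ i, BddAbove (Set.range fun t => (sisPhi G β δ)^[t] x i) := by
    intro i
    refine ⟨1, ?_⟩
    rintro y ⟨t, rfl⟩
    exact (iter_mem G hβ0 hβ1 hδ0 hδ1 hx0 hx1 t).2 i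
  set L : Fin n → ℝ := fun i => ⨆ t, (sisPhi G β δ)^[t] x i with hL
  have htendi : ∀ i, Filter.Tendsto (fun t => (sisPhi G β δ)^[t] x i) Filter.atTop (nhds (L i)) :=
    fun i => tendsto_atTop_ciSup (hMono i) (hBdd i)
  have htend : Filter.Tendsto (fun t => (sisPhi G β δ)^[t] x) Filter.atTop (nhds L) :=
    tendsto_pi_nhds.2 htendi
  have hL0 : ∀ j, 0 ≤ L j := by
    intro j
    have := (iter_mem G hβ0 hβ1 hδ0 hδ1 hx0 hx1 0).1 j
    exact le_trans this (le_ciSup (hBdd j) 0)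
  have hLx : ∀ i, x i ≤ L i := fun i => le_trans (le_refl _) (le_ciSup (hBdd i) 0)
  have hL1 : ∀ j, L j ≤ 1 := by
    intro j
    exact ciSup_le (fun t => (iter_mem G hβ0 hβ1 hδ0 hδ1 hx0 hx1 t).2 j)
  have hfix : sisPhi G β δ L = L := by
    have h1 : Filter.Tendsto (fun t => (sisPhi G β δ)^[t+1] x) Filter.atTop (nhds L) :=
      htend.comp (Filter.tendsto_add_atTop_nat 1)
    have h2 : Filter.Tendsto (fun t => sisPhi G β δ ((sisPhi G β δ)^[t] x)) Filter.atTop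
        (nhds (sisPhi G β δ L)) := ((phi_cont G).tendsto L).comp htend
    have h3 : (fun t => sisPhi G β δ ((sisPhi G β δ)^[t] x)) = fun t => (sisPhi G β δ)^[t+1] x := by
      funext t; rw [Function.iterate_succ_apply']
    rw [h3] at h2
    exact tendsto_nhds_unique h2 h1
  exact ⟨L, hL0, hL1, hfix, hLx, htend⟩

lemma tendsto_iter_of_decr (hβ0 : 0 < β) (hβ1 : β < 1) (hδ0 : 0 < δ) (hδ1 : δ < 1)
    {x : Fin n → ℝ} (hx0 : ∀ j, 0 ≤ x j) (hx1 : ∀ j, x j ≤ 1)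
    (hdn : ∀ i, sisPhi G β δ x i ≤ x i) :
    ∃ L : Fin n → ℝ, (∀ j, 0 ≤ L j) ∧ (∀ j, L j ≤ 1) ∧ sisPhi G β δ L = L ∧
      (∀ i, L i ≤ x i) ∧
      Filter.Tendsto (fun t => (sisPhi G β δ)^[t] x) Filter.atTop (nhds L) := by
  have hΦx0 : ∀ j, 0 ≤ sisPhi G β δ x j := fun j => (phi_mem G hβ0 hβ1 hδ0 hδ1 hx0 hx1 j).1
  have hΦx1 : ∀ j, sisPhi G β δ x j ≤ 1 := fun j => (phi_mem G hβ0 hβ1 hδ0 hδ1 hx0 hx1 j).2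
  have hstep : ∀ t i, (sisPhi G β δ)^[t+1] x i ≤ (sisPhi G β δ)^[t] x i := by
    intro t i
    rw [Function.iterate_succ_apply]
    exact iter_mono G hβ0 hβ1 hδ0 hδ1 hΦx0 hΦx1 hx0 hx1 hdn t i
  have hMono : ∀ i, Antitone (fun t => (sisPhi G β δ)^[t] x i) := fun i =>
    antitone_nat_of_succ_le (fun t => hstep t i)
  have hBdd : ∀ i, BddBelow (Set.range fun t => (sisPhi G β δ)^[t] x i) := by
    intro i
    refine ⟨0, ?_⟩
    rintro y ⟨t, rfl⟩
    exact (iter_mem G hβ0 hβ1 hδ0 hδ1 hx0 hx1 t).1 i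
  set L : Fin n → ℝ := fun i => ⨅ t, (sisPhi G β δ)^[t] x i with hL
  have htendi : ∀ i, Filter.Tendsto (fun t => (sisPhi G β δ)^[t] x i) Filter.atTop (nhds (L i)) :=
    fun i => tendsto_atTop_ciInf (hMono i) (hBdd i)
  have htend : Filter.Tendsto (fun t => (sisPhi G β δ)^[t] x) Filter.atTop (nhds L) :=
    tendsto_pi_nhds.2 htendi
  have hL0 : ∀ j, 0 ≤ L j := by
    intro j
    exact le_ciInf (fun t => (iter_mem G hβ0 hβ1 hδ0 hδ1 hx0 hx1 t).1 j)
  have hLx : ∀ i, L i ≤ x i := fun i => ciInf_le (hBdd i) 0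
  have hL1 : ∀ j, L j ≤ 1 := fun j =>
    le_trans (ciInf_le (hBdd j) 0) (hx1 j)
  have hfix : sisPhi G β δ L = L := by
    have h1 : Filter.Tendsto (fun t => (sisPhi G β δ)^[t+1] x) Filter.atTop (nhds L) :=
      htend.comp (Filter.tendsto_add_atTop_nat 1)
    have h2 : Filter.Tendsto (fun t => sisPhi G β δ ((sisPhi G β δ)^[t] x)) Filter.atTop
        (nhds (sisPhi G β δ L)) := ((phi_cont G).tendsto L).comp htend
    have h3 : (fun t => sisPhi G β δ ((sisPhi G β δ)^[t] x)) = fun t => (sisPhi G β δ)^[t+1] x := by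
      funext t; rw [Function.iterate_succ_apply']
    rw [h3] at h2
    exact tendsto_nhds_unique h2 h1
  exact ⟨L, hL0, hL1, hfix, hLx, htend⟩


lemma fixed_le (hβ0 : 0 < β) (hβ1 : β < 1) (hδ0 : 0 < δ) (hδ1 : δ < 1)
    {z w : Fin n → ℝ} (hz0 : ∀ i, 0 < z i) (hz1 : ∀ i, z i ≤ 1)
    (hw0 : ∀ i, 0 < w i) (hw1 : ∀ i, w i ≤ 1)
    (hz : sisPhi G β δ z = z) (hw : sisPhi G β δ w = w) : ∀ i, w i ≤ z i := by
  by_contra hcon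
  push_neg at hcon
  obtain ⟨i0, hi0⟩ := hcon
  obtain ⟨k, -, hk⟩ := Finset.exists_min_image Finset.univ (fun i => z i / w i)
    ⟨i0, Finset.mem_univ i0⟩
  set c := z k / w k with hc
  have hc0 : 0 < c := div_pos (hz0 k) (hw0 k)
  have hc1 : c < 1 := by
    have h1 : c ≤ z i0 / w i0 := hk i0 (Finset.mem_univ i0)
    have h2 : z i0 / w i0 < 1 := (div_lt_one (hw0 i0)).2 hi0
    linarith
  have hcw_le : ∀ j, c * w j ≤ z j := by
    intro j
    have := hk j (Finset.mem_univ j)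
    rw [div_le_div_iff₀ (hw0 k) (hw0 j)] at this
    calc c * w j = z k / w k * w j := rfl
      _ ≤ z j := by
          rw [div_mul_eq_mul_div, div_le_iff₀ (hw0 k)]
          linarith [this]
  have hck : c * w k = z k := by
    rw [hc]; exact div_mul_cancel₀ _ (hw0 k).ne'
  -- g at k for w is positive
  set P := ∏ j ∈ G.neighborFinset k, (1 - β * w j) with hP
  have hgq0 : (0:ℝ) ≤ 1 - P := by
    have : P ≤ 1 := Finset.prod_le_one (fun j _ => by nlinarith [(hw0 j).le, hw1 j])
      (fun j _ => by nlinarith [(hw0 j).le])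
    linarith
  have hweq : w k = (1-δ) * w k + (1 - (1-δ) * w k) * (1 - P) := by
    conv_lhs => rw [← congrFun hw k]
    simp only [hP]
    rfl
  have hfacw : 0 < 1 - (1-δ) * w k := by nlinarith [hw0 k, hw1 k]
  have hgq_pos : 0 < 1 - P := by
    rcases lt_or_ge 0 (1 - P) with h | h
    · exact h
    · exfalso
      have hP1 : 1 - P = 0 := le_antisymm (by linarith) hgq0
      rw [hP1, mul_zero] at hweq
      nlinarith [hz0 k, hw0 k]
  -- monotonicity: Φ(c•w) ≤ Φ(z) = z
  have hmono := phi_mono G hβ0 hβ1 hδ0 hδ1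
    (x := fun j => c * w j) (y := z)
    (fun j => mul_nonneg hc0.le (hw0 j).le) hz1 hcw_le k
  rw [hz] at hmono
  -- subhomogeneity at k
  have hsub : c * (1 - P) ≤ 1 - ∏ j ∈ G.neighborFinset k, (1 - β * (c * w j)) := by
    have h := prod_subhomog (G.neighborFinset k) (fun j => β * w j) c hc0.le hc1.le
      (fun j _ => mul_nonneg hβ0.le (hw0 j).le)
      (fun j _ => by show β * w j ≤ 1; nlinarith [(hw0 j).le, hw1 j])
    have hre : ∏ j ∈ G.neighborFinset k, (1 - c * (β * w j)) =
        ∏ j ∈ G.neighborFinset k, (1 - β * (c * w j)) :=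
      Finset.prod_congr rfl (fun j _ => by ring_nf)
    rw [hre] at h
    exact h
  -- strict inequality chain
  have hphicw : sisPhi G β δ (fun j => c * w j) k =
      (1-δ) * (c * w k) + (1 - (1-δ) * (c * w k)) *
        (1 - ∏ j ∈ G.neighborFinset k, (1 - β * (c * w j))) := rfl
  have hfacc : 0 ≤ 1 - (1-δ) * (c * w k) := by
    nlinarith [hw0 k, hw1 k, hc0, hc1]
  have hlow : (1-δ) * (c * w k) + (1 - (1-δ) * (c * w k)) * (c * (1 - P)) ≤
      sisPhi G β δ (fun j => c * w j) k := by
    rw [hphicw]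
    have := mul_le_mul_of_nonneg_left hsub hfacc
    linarith
  have hstrict : z k < (1-δ) * (c * w k) + (1 - (1-δ) * (c * w k)) * (c * (1 - P)) := by
    have hzk : z k = c * ((1-δ) * w k + (1 - (1-δ) * w k) * (1 - P)) := by
      rw [← hweq, hck]
    rw [hzk]
    have key : 0 < c * (1 - P) * ((1-δ) * w k) * (1 - c) := by
      apply mul_pos (mul_pos (mul_pos hc0 hgq_pos) (by nlinarith [hw0 k])) (by linarith)
    nlinarith [key]
  have : z k < z k := lt_of_lt_of_le (lt_of_lt_of_le hstrict hlow) hmono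
  exact lt_irrefl _ this


end F

set_option maxHeartbeats 1000000 in
lemma unstable {n : ℕ} (G : SimpleGraph (Fin n)) [DecidableRel G.Adj] {β δ lam : ℝ}
    (hβ0 : 0 < β) (hβ1 : β < 1) (hδ0 : 0 < δ) (hδ1 : δ < 1)
    (hlam : δ < β * lam) (w : Fin n → ℝ) (hw0 : ∀ i, 0 ≤ w i)
    (hwT : 0 < ∑ j, w j)
    (hAw : ∀ i, lam * w i ≤ ∑ j ∈ G.neighborFinset i, w j) :
    ∃ ε₀ : ℝ, 0 < ε₀ ∧ ∀ ε : ℝ, 0 < ε → ε ≤ ε₀ →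
      (∀ i, ε * w i ≤ 1) ∧ ∀ i, ε * w i ≤ sisPhi G β δ (fun j => ε * w j) i := by
  set T := ∑ j, w j with hT
  clear_value T
  have hlam0 : 0 < lam := by nlinarith
  have hnum : 0 < 1 - δ/(β*lam) := by
    have : δ/(β*lam) < 1 := (div_lt_one (by positivity)).2 hlam
    linarith
  refine ⟨(1 - δ/(β*lam))/(2*T), by positivity, ?_⟩
  intro ε hε hεle
  have hεT : ε * T ≤ (1 - δ/(β*lam))/2 := by
    have := mul_le_mul_of_nonneg_right hεle (le_of_lt hwT)
    calc ε * T ≤ (1 - δ/(β*lam))/(2*T) * T := this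
      _ = (1 - δ/(β*lam))/2 := by field_simp
  have hdbl : 0 < δ/(β*lam) := by positivity
  have hεT1 : ε * T < 1/2 := by nlinarith
  have hwle : ∀ i, w i ≤ T := by
    intro i
    rw [hT]
    exact Finset.single_le_sum (fun j _ => hw0 j) (Finset.mem_univ i)
  have hεwi : ∀ i, ε * w i ≤ 1 := by
    intro i
    nlinarith [hwle i, mul_le_mul_of_nonneg_left (hwle i) hε.le]
  refine ⟨hεwi, ?_⟩
  intro i
  -- notation
  set S := ∑ j ∈ G.neighborFinset i, β * (ε * w j) with hS
  have hSsum : S = β * ε * ∑ j ∈ G.neighborFinset i, w j := by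
    rw [hS, Finset.mul_sum]
    exact Finset.sum_congr rfl (fun j _ => by ring)
  clear_value S
  have hNle : ∑ j ∈ G.neighborFinset i, w j ≤ T := by
    rw [hT]
    exact Finset.sum_le_sum_of_subset_of_nonneg (Finset.subset_univ _) (fun j _ _ => hw0 j)
  have hSub : S ≤ β * ε * T := by
    rw [hSsum]
    exact mul_le_mul_of_nonneg_left hNle (by positivity)
  have hSlb : β * ε * (lam * w i) ≤ S := by
    rw [hSsum]
    exact mul_le_mul_of_nonneg_left (hAw i) (by positivity)
  have hS0 : 0 ≤ S := le_trans (by nlinarith [mul_nonneg (mul_nonneg hβ0.le hε.le) (mul_nonneg hlam0.le (hw0 i))]) hSlb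
  have hprod : ∏ j ∈ G.neighborFinset i, (1 - β * (ε * w j)) ≤ 1 - S + S^2/2 := by
    rw [hS]
    apply prod_one_sub_le
    · intro j _; exact mul_nonneg hβ0.le (mul_nonneg hε.le (hw0 j))
    · intro j _
      nlinarith [hεwi j, mul_nonneg hε.le (hw0 j)]
  have hg : S - S^2/2 ≤ 1 - ∏ j ∈ G.neighborFinset i, (1 - β * (ε * w j)) := by
    linarith
  -- main estimate
  have hwi0 : 0 ≤ ε * w i := mul_nonneg hε.le (hw0 i)
  have hwiT : ε * w i ≤ ε * T := mul_le_mul_of_nonneg_left (hwle i) hε.le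
  have hE0 : 0 ≤ ε * T := le_trans hwi0 hwiT
  have hE1 : 0 < 1 - ε * T := by linarith
  have hSE : S ≤ ε * T := le_trans hSub (by nlinarith)
  have hSlb' : β * lam * (ε * w i) ≤ S := by nlinarith [hSlb]
  have c1 : S * (1 - ε*T) ≤ S - S^2/2 := by
    nlinarith [mul_nonneg hS0 (sub_nonneg.2 hSE), sq_nonneg S]
  have c2 : β * lam * (ε * w i) * (1 - ε*T) ≤ S * (1 - ε*T) :=
    mul_le_mul_of_nonneg_right hSlb' hE1.le
  have hf : δ ≤ β * lam * (1 - 2*(ε*T)) := by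
    have h5 : δ/(β*lam) ≤ 1 - 2*(ε*T) := by linarith
    calc δ = δ/(β*lam) * (β*lam) := by field_simp
      _ ≤ (1 - 2*(ε*T)) * (β*lam) := mul_le_mul_of_nonneg_right h5 (by positivity)
      _ = β * lam * (1 - 2*(ε*T)) := by ring
  have c3 : δ * (ε * w i) ≤ β * lam * (ε * w i) * (1 - ε*T) * (1 - ε*T) := by
    have u1 : δ * (ε * w i) ≤ β * lam * (1 - 2*(ε*T)) * (ε * w i) :=
      mul_le_mul_of_nonneg_right hf hwi0
    have u2 : 0 ≤ β * lam * (ε * w i) * ((ε*T)*(ε*T)) :=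
      mul_nonneg (mul_nonneg (mul_nonneg hβ0.le hlam0.le) hwi0)
        (mul_nonneg hE0 hE0)
    have u3 : β * lam * (ε * w i) * (1 - ε*T) * (1 - ε*T)
        - β * lam * (1 - 2*(ε*T)) * (ε * w i) = β * lam * (ε * w i) * ((ε*T)*(ε*T)) := by
      ring
    linarith [u1, u2, u3]
  have hlb0 : 0 ≤ β * lam * (ε * w i) * (1 - ε*T) :=
    mul_nonneg (mul_nonneg (mul_nonneg hβ0.le hlam0.le) hwi0) hE1.le
  have c4 : β * lam * (ε * w i) * (1 - ε*T) * (1 - ε*T) ≤ (S - S^2/2) * (1 - ε*T) :=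
    mul_le_mul_of_nonneg_right (c2.trans c1) hE1.le
  have hfac : 0 ≤ 1 - (1-δ) * (ε * w i) := by nlinarith [hεwi i]
  have h1 : 1 - ε * T ≤ 1 - (1-δ) * (ε * w i) := by nlinarith
  have hSg0 : 0 ≤ S - S^2/2 := le_trans hlb0 (c2.trans c1)
  have c5 : (S - S^2/2) * (1 - ε*T) ≤ (S - S^2/2) * (1 - (1-δ) * (ε * w i)) :=
    mul_le_mul_of_nonneg_left h1 hSg0
  have key : δ * (ε * w i) ≤ (1 - (1-δ) * (ε * w i)) * (S - S^2/2) := by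
    have := c3.trans (c4.trans c5)
    linarith [this]
  unfold sisPhi
  simp only
  nlinarith [mul_le_mul_of_nonneg_left hg hfac]


/-- If `β λmax(A) / δ > 1`, then the SIS nonlinear map `Φ` has a unique
fixed point `x* ≠ 0` in `[0,1]^n`, and for every `P(0) ∈ [0,1]^n` with `P(0) ≠ 0` the
iterates `Φ^t(P(0))` converge to `x*`. -/
theorem stmt3 {n : ℕ} (hn : 1 ≤ n) (G : SimpleGraph (Fin n)) [DecidableRel G.Adj]
    (hG : G.Connected) (β δ : ℝ) (hβ : β ∈ Set.Ioo (0 : ℝ) 1) (hδ : δ ∈ Set.Ioo (0 : ℝ) 1)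
    (h : 1 < β * lamMax (G.adjMatrix ℝ) / δ) :
    ∃ xs : Fin n → ℝ, xs ∈ Set.Icc (0 : Fin n → ℝ) 1 ∧ xs ≠ 0 ∧ sisPhi G β δ xs = xs ∧
      (∀ y ∈ Set.Icc (0 : Fin n → ℝ) 1, y ≠ 0 → sisPhi G β δ y = y → y = xs) ∧
      ∀ p ∈ Set.Icc (0 : Fin n → ℝ) 1, p ≠ 0 →
        Filter.Tendsto (fun t => (sisPhi G β δ)^[t] p) Filter.atTop (nhds xs) := by
  classical
  obtain ⟨hβ0, hβ1⟩ := hβ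
  obtain ⟨hδ0, hδ1⟩ := hδ
  have hlam : δ < β * lamMax (G.adjMatrix ℝ) := by
    rw [lt_div_iff₀ hδ0, one_mul] at h
    exact h
  have hH : (G.adjMatrix ℝ).IsHermitian := by
    rw [Matrix.IsHermitian, Matrix.conjTranspose_eq_transpose_of_trivial,
      SimpleGraph.transpose_adjMatrix]
  obtain ⟨v, hv0, hveq, -⟩ := exists_eigvec hn (G.adjMatrix ℝ) hH
  have hlam0 : 0 < lamMax (G.adjMatrix ℝ) := by nlinarith
  set w : Fin n → ℝ := fun i => |v i| with hwdef
  have hw0 : ∀ i, 0 ≤ w i := fun i => abs_nonneg _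
  obtain ⟨i₁, hi₁⟩ : ∃ i, v i ≠ 0 := Function.ne_iff.1 hv0
  have hwi₁ : 0 < w i₁ := abs_pos.2 hi₁
  have hwT : 0 < ∑ j, w j :=
    Finset.sum_pos' (fun j _ => hw0 j) ⟨i₁, Finset.mem_univ _, hwi₁⟩
  have hAw : ∀ i, lamMax (G.adjMatrix ℝ) * w i ≤ ∑ j ∈ G.neighborFinset i, w j := by
    intro i
    have h1 : (G.adjMatrix ℝ *ᵥ v) i = lamMax (G.adjMatrix ℝ) * v i := by
      rw [hveq]; simp
    have h2 : (G.adjMatrix ℝ *ᵥ v) i = ∑ j ∈ G.neighborFinset i, v j :=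
      SimpleGraph.adjMatrix_mulVec_apply _ _ _
    calc lamMax (G.adjMatrix ℝ) * w i = |lamMax (G.adjMatrix ℝ) * v i| := by
          rw [abs_mul, abs_of_pos hlam0]
      _ = |∑ j ∈ G.neighborFinset i, v j| := by rw [← h1, h2]
      _ ≤ ∑ j ∈ G.neighborFinset i, |v j| := Finset.abs_sum_le_sum_abs _ _
      _ = ∑ j ∈ G.neighborFinset i, w j := rfl
  obtain ⟨ε₀, hε0, hεp⟩ := unstable G hβ0 hβ1 hδ0 hδ1 hlam w hw0 hwT hAw
  obtain ⟨hx1le, hxup⟩ := hεp ε₀ hε0 le_rfl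
  have hx0' : ∀ j, 0 ≤ ε₀ * w j := fun j => mul_nonneg hε0.le (hw0 j)
  obtain ⟨L, hL0, hL1, hLfix, hLge, hLtend⟩ :=
    tendsto_iter_of_incr G hβ0 hβ1 hδ0 hδ1 hx0' hx1le hxup
  have hLpos₁ : 0 < L i₁ := lt_of_lt_of_le (mul_pos hε0 hwi₁) (hLge i₁)
  have posfix : ∀ z : Fin n → ℝ, (∀ j, 0 ≤ z j) → (∀ j, z j ≤ 1) → sisPhi G β δ z = z →
      (∃ j, 0 < z j) → ∀ i, 0 < z i := by
    rintro z hz0 hz1 hzfix ⟨j, hj⟩ i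
    have W := (hG.preconnected j i).some
    have hs := spread G hβ0 hβ1 hδ0 hδ1 W z hz0 hz1 hj
    rwa [Function.iterate_fixed hzfix] at hs
  have hLpos : ∀ i, 0 < L i := posfix L hL0 hL1 hLfix ⟨i₁, hLpos₁⟩
  have uniq : ∀ y : Fin n → ℝ, (∀ j, 0 ≤ y j) → (∀ j, y j ≤ 1) → y ≠ 0 →
      sisPhi G β δ y = y → y = L := by
    intro y hy0 hy1 hyne hyfix
    have hypos : ∀ i, 0 < y i := by
      apply posfix y hy0 hy1 hyfix
      obtain ⟨j, hj⟩ := Function.ne_iff.1 hyne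
      refine ⟨j, lt_of_le_of_ne (hy0 j) ?_⟩
      simpa using (Ne.symm hj)
    have h1 := fixed_le G hβ0 hβ1 hδ0 hδ1 hypos hy1 hLpos hL1 hyfix hLfix
    have h2 := fixed_le G hβ0 hβ1 hδ0 hδ1 hLpos hL1 hypos hy1 hLfix hyfix
    funext i
    exact le_antisymm (h2 i) (h1 i)
  have hLne : L ≠ 0 := by
    intro h0
    rw [h0] at hLpos₁
    simp at hLpos₁
  refine ⟨L, Set.mem_Icc.2 ⟨fun i => hL0 i, fun i => hL1 i⟩, hLne, hLfix, ?_, ?_⟩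
  · intro y hy hyne hyfix
    exact uniq y (fun j => hy.1 j) (fun j => hy.2 j) hyne hyfix
  · intro p hpmem hpne
    have hp0 : ∀ j, 0 ≤ p j := fun j => hpmem.1 j
    have hp1 : ∀ j, p j ≤ 1 := fun j => hpmem.2 j
    obtain ⟨j₀, hj₀ne⟩ := Function.ne_iff.1 hpne
    have hj₀ : 0 < p j₀ := lt_of_le_of_ne (hp0 j₀) (by simpa using (Ne.symm hj₀ne))
    set len : Fin n → ℕ := fun i => ((hG.preconnected j₀ i).some).length with hlen
    set T := Finset.univ.sup len with hT
    have hposT : ∀ i, 0 < (sisPhi G β δ)^[T] p i := by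
      intro i
      exact pos_persist G hβ0 hβ1 hδ0 hδ1 hp0 hp1
        (Finset.le_sup (Finset.mem_univ i))
        (spread G hβ0 hβ1 hδ0 hδ1 ((hG.preconnected j₀ i).some) p hp0 hp1 hj₀)
    set q := (sisPhi G β δ)^[T] p with hq
    obtain ⟨hq0, hq1⟩ := iter_mem G hβ0 hβ1 hδ0 hδ1 hp0 hp1 T
    have hne : (Finset.univ : Finset (Fin n)).Nonempty := ⟨j₀, Finset.mem_univ _⟩
    set m := Finset.univ.inf' hne q with hm
    obtain ⟨km, -, hkm⟩ := Finset.exists_mem_eq_inf' hne q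
    have hm0 : 0 < m := by rw [hm, hkm]; exact hposT km
    set TW := ∑ j, w j with hTW
    set ε := min ε₀ (m / TW) with hε
    have hεpos : 0 < ε := lt_min hε0 (div_pos hm0 hwT)
    have hwle : ∀ i, w i ≤ TW := fun i =>
      Finset.single_le_sum (fun j _ => hw0 j) (Finset.mem_univ i)
    have hεwq : ∀ i, ε * w i ≤ q i := by
      intro i
      calc ε * w i ≤ (m/TW) * w i :=
            mul_le_mul_of_nonneg_right (min_le_right _ _) (hw0 i)
        _ ≤ (m/TW) * TW :=
            mul_le_mul_of_nonneg_left (hwle i) (le_of_lt (div_pos hm0 hwT))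
        _ = m := div_mul_cancel₀ _ hwT.ne'
        _ ≤ q i := Finset.inf'_le _ (Finset.mem_univ i)
    obtain ⟨hx1le', hxup'⟩ := hεp ε hεpos (min_le_left _ _)
    have hx0'' : ∀ j, 0 ≤ ε * w j := fun j => mul_nonneg hεpos.le (hw0 j)
    obtain ⟨L', hL'0, hL'1, hL'fix, hL'ge, hL'tend⟩ :=
      tendsto_iter_of_incr G hβ0 hβ1 hδ0 hδ1 hx0'' hx1le' hxup'
    have hL'ne : L' ≠ 0 := by
      intro h0
      have hp := lt_of_lt_of_le (mul_pos hεpos hwi₁) (hL'ge i₁)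
      rw [h0] at hp
      simp at hp
    have hL'L : L' = L := uniq L' hL'0 hL'1 hL'ne hL'fix
    have hone0 : ∀ j : Fin n, (0:ℝ) ≤ (fun _ : Fin n => (1:ℝ)) j := fun j => zero_le_one
    have hone1 : ∀ j : Fin n, (fun _ : Fin n => (1:ℝ)) j ≤ 1 := fun j => le_refl _
    have honedn : ∀ i, sisPhi G β δ (fun _ => (1:ℝ)) i ≤ (fun _ : Fin n => (1:ℝ)) i :=
      fun i => (phi_mem G hβ0 hβ1 hδ0 hδ1 hone0 hone1 i).2
    obtain ⟨U, hU0, hU1, hUfix, hUle, hUtend⟩ :=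
      tendsto_iter_of_decr G hβ0 hβ1 hδ0 hδ1 hone0 hone1 honedn
    have hεw1 : ∀ j, ε * w j ≤ (fun _ : Fin n => (1:ℝ)) j := fun j => hx1le' j
    have hUgeL : ∀ i, L i ≤ U i := by
      intro i
      have hc1 : Filter.Tendsto (fun t => (sisPhi G β δ)^[t] (fun j => ε * w j) i)
          Filter.atTop (nhds (L i)) := by
        have := tendsto_pi_nhds.1 hL'tend i
        rwa [hL'L] at this
      have hc2 : Filter.Tendsto (fun t => (sisPhi G β δ)^[t] (fun _ : Fin n => (1:ℝ)) i)
          Filter.atTop (nhds (U i)) := tendsto_pi_nhds.1 hUtend i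
      exact le_of_tendsto_of_tendsto' hc1 hc2
        (fun t => iter_mono G hβ0 hβ1 hδ0 hδ1 hx0'' hx1le' hone0 hone1 hεw1 t i)
    have hUne : U ≠ 0 := by
      intro h0
      have hp := lt_of_lt_of_le (hLpos i₁) (hUgeL i₁)
      rw [h0] at hp
      simp at hp
    have hUL : U = L := uniq U hU0 hU1 hUne hUfix
    have hq1' : ∀ j, q j ≤ (fun _ : Fin n => (1:ℝ)) j := fun j => hq1 j
    have hsq : Filter.Tendsto (fun t => (sisPhi G β δ)^[t] q) Filter.atTop (nhds L) := by
      rw [tendsto_pi_nhds]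
      intro i
      have hc1 : Filter.Tendsto (fun t => (sisPhi G β δ)^[t] (fun j => ε * w j) i)
          Filter.atTop (nhds (L i)) := by
        have := tendsto_pi_nhds.1 hL'tend i
        rwa [hL'L] at this
      have hc2 : Filter.Tendsto (fun t => (sisPhi G β δ)^[t] (fun _ : Fin n => (1:ℝ)) i)
          Filter.atTop (nhds (L i)) := by
        have := tendsto_pi_nhds.1 hUtend i
        rwa [hUL] at this
      exact tendsto_of_tendsto_of_tendsto_of_le_of_le hc1 hc2
        (fun t => iter_mono G hβ0 hβ1 hδ0 hδ1 hx0'' hx1le' hq0 hq1 hεwq t i)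
        (fun t => iter_mono G hβ0 hβ1 hδ0 hδ1 hq0 hq1 hone0 hone1 hq1' t i)
    have hshift : (fun t => (sisPhi G β δ)^[t] q) = fun t => (sisPhi G β δ)^[t + T] p := by
      funext t
      rw [hq, ← Function.iterate_add_apply]
    rw [hshift] at hsq
    exact (Filter.tendsto_add_atTop_iff_nat T).1 hsq
end

section
/- Consider the SIS Markov chain with transition matrix S. Let ξ(t) have an arbitrary probability distribution on {0,1}^n, let p_i(t) = P(ξ_i(t) = 1) be the marginal infection probabilities, and let ξ(t+1) be obtained by one step of the chain. Then for every node i, p_i(t+1) ≤ (1−δ)p_i(t) + β∑_{j∈N_i} p_j(t); equivalently, the vector of marginals satisfies p(t+1) ⪯ ((1−δ)I_n + βA)p(t) entrywise. -/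
open Matrix Finset

/-- Number of infected neighbors of node `i` in state `X`. -/
def numInf {n : ℕ} (G : SimpleGraph (Fin n)) [DecidableRel G.Adj]
    (X : Fin n → Bool) (i : Fin n) : ℕ :=
  ((G.neighborFinset i).filter (fun j => X j = true)).card

/-- The `2^n × 2^n` transition matrix of the SIS Markov chain:
`S_{X,Y} = ∏_i P(Y_i | X)`, where `P(Y_i = 0 | X) = (1−β)^{m_i}` if `X_i = 0` and
`δ(1−β)^{m_i}` if `X_i = 1`. -/
noncomputable def sisTrans {n : ℕ} (G : SimpleGraph (Fin n)) [DecidableRel G.Adj]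
    (β δ : ℝ) : Matrix (Fin n → Bool) (Fin n → Bool) ℝ :=
  Matrix.of fun X Y => ∏ i,
    if X i then
      (if Y i then 1 - δ * (1 - β) ^ numInf G X i else δ * (1 - β) ^ numInf G X i)
    else
      (if Y i then 1 - (1 - β) ^ numInf G X i else (1 - β) ^ numInf G X i)

/-- One-node transition factor. -/
noncomputable def gfac {n : ℕ} (G : SimpleGraph (Fin n)) [DecidableRel G.Adj]
    (β δ : ℝ) (X : Fin n → Bool) (j : Fin n) (b : Bool) : ℝ :=
  if X j then
    (if b then 1 - δ * (1 - β) ^ numInf G X j else δ * (1 - β) ^ numInf G X j)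
  else
    (if b then 1 - (1 - β) ^ numInf G X j else (1 - β) ^ numInf G X j)

lemma sisTrans_eq {n : ℕ} (G : SimpleGraph (Fin n)) [DecidableRel G.Adj]
    (β δ : ℝ) (X Y : Fin n → Bool) :
    sisTrans G β δ X Y = ∏ j, gfac G β δ X j (Y j) := rfl

lemma gfac_sum {n : ℕ} (G : SimpleGraph (Fin n)) [DecidableRel G.Adj]
    (β δ : ℝ) (X : Fin n → Bool) (j : Fin n) :
    gfac G β δ X j false + gfac G β δ X j true = 1 := by
  unfold gfac; by_cases h : X j <;> simp [h] <;> ring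

lemma marginal {n : ℕ} (G : SimpleGraph (Fin n)) [DecidableRel G.Adj]
    (β δ : ℝ) (X : Fin n → Bool) (i : Fin n) :
    ∑ Y ∈ Finset.univ.filter (fun Y : Fin n → Bool => Y i = true),
      sisTrans G β δ X Y = gfac G β δ X i true := by
  set h : Fin n → Bool → ℝ :=
    fun j b => if j = i then (if b then gfac G β δ X j true else 0) else gfac G β δ X j b
    with hh
  have key : ∀ Y : Fin n → Bool,
      (if Y i = true then sisTrans G β δ X Y else 0) = ∏ j, h j (Y j) := by
    intro Y
    by_cases hY : Y i = true
    · rw [if_pos hY, sisTrans_eq]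
      refine Finset.prod_congr rfl fun j _ => ?_
      by_cases hj : j = i
      · subst hj; simp [hh, hY]
      · simp [hh, hj]
    · rw [if_neg hY]
      symm
      apply Finset.prod_eq_zero (Finset.mem_univ i)
      simp only [Bool.not_eq_true] at hY
      simp [hh, hY]
  rw [Finset.sum_filter]
  simp_rw [key]
  rw [← Fintype.piFinset_univ, ← Finset.prod_univ_sum]
  have hs : ∀ j, (∑ b ∈ (Finset.univ : Finset Bool), h j b)
      = if j = i then gfac G β δ X i true else 1 := by
    intro j
    rw [Fintype.sum_bool]
    by_cases hj : j = i
    · subst hj; simp [hh]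
    · simp only [hh, if_neg hj]
      rw [add_comm]
      exact gfac_sum G β δ X j
  simp_rw [hs]
  simp

lemma indicator_bound {n : ℕ} (G : SimpleGraph (Fin n)) [DecidableRel G.Adj]
    (β δ : ℝ) (hβ : β ∈ Set.Ioo (0 : ℝ) 1) (hδ : δ ∈ Set.Ioo (0 : ℝ) 1)
    (X : Fin n → Bool) (i : Fin n) :
    gfac G β δ X i true ≤
      (1 - δ) * (if X i then 1 else 0) + β * (numInf G X i : ℝ) := by
  obtain ⟨hβ0, hβ1⟩ := hβ
  obtain ⟨hδ0, hδ1⟩ := hδ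
  set m := numInf G X i with hm
  have hpow0 : (0:ℝ) ≤ (1 - β) ^ m := pow_nonneg (by linarith) m
  have hbern : 1 - (m : ℝ) * β ≤ (1 - β) ^ m := by
    have := one_add_mul_le_pow (a := -β) (by linarith) m
    simpa [sub_eq_add_neg, mul_comm] using this
  have hβm : (0:ℝ) ≤ β * m := by positivity
  by_cases h : X i
  · have hg : gfac G β δ X i true = 1 - δ * (1 - β) ^ m := by simp [gfac, h, hm]
    rw [hg]; simp only [h, if_true]
    nlinarith
  · have hg : gfac G β δ X i true = 1 - (1 - β) ^ m := by simp [gfac, h, hm]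
    rw [hg]; simp only [h, Bool.false_eq_true, if_false]
    nlinarith

lemma numInf_as_sum {n : ℕ} (G : SimpleGraph (Fin n)) [DecidableRel G.Adj]
    (X : Fin n → Bool) (i : Fin n) :
    (numInf G X i : ℝ) = ∑ j ∈ G.neighborFinset i, (if X j then (1:ℝ) else 0) := by
  simp [numInf, Finset.sum_boole]

/-- For any probability distribution `μ` on `{0,1}^n` (the law of `ξ(t)`),
one step of the SIS chain satisfies
`p_i(t+1) ≤ (1−δ) p_i(t) + β ∑_{j ∈ N_i} p_j(t)` for every node `i`, where
`p_i` denotes the marginal probability that node `i` is infected. -/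
theorem stmt4 {n : ℕ} (hn : 1 ≤ n) (G : SimpleGraph (Fin n)) [DecidableRel G.Adj]
    (hG : G.Connected) (β δ : ℝ) (hβ : β ∈ Set.Ioo (0 : ℝ) 1) (hδ : δ ∈ Set.Ioo (0 : ℝ) 1)
    (μ : (Fin n → Bool) → ℝ) (hμ0 : ∀ X, 0 ≤ μ X) (hμ1 : ∑ X, μ X = 1) (i : Fin n) :
    ∑ Y ∈ Finset.univ.filter (fun Y : Fin n → Bool => Y i = true), (μ ᵥ* sisTrans G β δ) Y ≤
      (1 - δ) * ∑ X ∈ Finset.univ.filter (fun X : Fin n → Bool => X i = true), μ X +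
        β * ∑ j ∈ G.neighborFinset i,
          ∑ X ∈ Finset.univ.filter (fun X : Fin n → Bool => X j = true), μ X := by
  have hLHS : ∑ Y ∈ Finset.univ.filter (fun Y : Fin n → Bool => Y i = true),
      (μ ᵥ* sisTrans G β δ) Y = ∑ X, μ X * gfac G β δ X i true := by
    simp only [Matrix.vecMul, dotProduct]
    rw [Finset.sum_comm]
    refine Finset.sum_congr rfl fun X _ => ?_
    rw [← Finset.mul_sum, marginal]
  rw [hLHS]
  have hstep : ∑ X, μ X * gfac G β δ X i true ≤
      ∑ X, μ X * ((1 - δ) * (if X i then (1:ℝ) else 0)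
        + β * ∑ j ∈ G.neighborFinset i, (if X j then (1:ℝ) else 0)) := by
    refine Finset.sum_le_sum fun X _ => ?_
    refine mul_le_mul_of_nonneg_left ?_ (hμ0 X)
    rw [← numInf_as_sum]
    exact indicator_bound G β δ hβ hδ X i
  refine hstep.trans_eq ?_
  simp_rw [mul_add]
  rw [Finset.sum_add_distrib]
  congr 1
  · rw [Finset.mul_sum, Finset.sum_filter]
    refine Finset.sum_congr rfl fun X _ => ?_
    by_cases h : X i <;> simp [h] <;> ring
  · simp_rw [Finset.mul_sum]
    rw [Finset.sum_comm]
    refine Finset.sum_congr rfl fun j _ => ?_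
    rw [Finset.sum_filter]
    refine Finset.sum_congr rfl fun X _ => ?_
    by_cases h : X j <;> simp [h] <;> ring
end

section
/- The transition matrix S of the SIS Markov chain preserves the stochastic order ≤_st: if μ and μ′ are probability distributions on {0,1}^n with μ ≤_st μ′, then μS ≤_st μ′S. -/
open Matrix Finset

/-- generic decomposition of a product into mixture of down-set indicators -/
lemma prod_if_decomp {n : ℕ} (a : Fin n → ℝ) (X : Fin n → Bool) :
    ∏ k, (if X k then a k else 1) =
      ∑ W : Fin n → Bool, (∏ k, if W k then a k else 1 - a k) *
        (if ∀ k, X k ≤ W k then 1 else 0) := by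
  have h : ∀ W : Fin n → Bool,
      (∏ k, if W k then a k else 1 - a k) * (if ∀ k, X k ≤ W k then 1 else 0)
      = ∏ k, ((if W k then a k else 1 - a k) * (if X k ≤ W k then 1 else 0)) := by
    intro W
    rw [Finset.prod_mul_distrib]
    congr 1
    by_cases h : ∀ k, X k ≤ W k
    · simp [h]
    · push_neg at h
      obtain ⟨k, hk⟩ := h
      rw [if_neg (by push_neg; exact ⟨k, hk⟩)]
      rw [Finset.prod_eq_zero (Finset.mem_univ k) (by simp [hk])]
  simp_rw [h]
  rw [← Fintype.piFinset_univ, ← Finset.prod_univ_sum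
    (fun _ => (univ : Finset Bool))
    (fun k b => (if b then a k else 1 - a k) * (if X k ≤ b then 1 else 0))]
  apply Finset.prod_congr rfl
  intro k _
  cases hX : X k <;> simp [Fintype.sum_bool, hX] <;> ring

lemma swapSum {n : ℕ} (G : SimpleGraph (Fin n)) [DecidableRel G.Adj]
    (Z X : Fin n → Bool) :
    ∑ i, (if Z i then 0 else numInf G X i)
      = ∑ k, (if X k then ((G.neighborFinset k).filter (fun i => Z i = false)).card
          else 0) := by
  have h1 : ∀ i, (if Z i then (0:ℕ) else numInf G X i)
      = ∑ j, if (Z i = false ∧ G.Adj i j ∧ X j = true) then 1 else 0 := by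
    intro i
    cases hZ : Z i
    · rw [if_neg (by simp [hZ])]
      unfold numInf
      rw [SimpleGraph.neighborFinset_eq_filter, Finset.filter_filter, Finset.card_filter]
      simp
    · simp [hZ]
  have h2 : ∀ j, (if X j then (((G.neighborFinset j).filter (fun i => Z i = false)).card)
        else (0:ℕ))
      = ∑ i, if (Z i = false ∧ G.Adj i j ∧ X j = true) then 1 else 0 := by
    intro j
    cases hX : X j
    · simp [hX]
    · rw [SimpleGraph.neighborFinset_eq_filter, Finset.filter_filter, Finset.card_filter,
        if_pos rfl]
      apply Finset.sum_congr rfl; intro i _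
      have : G.Adj j i ↔ G.Adj i j := G.adj_comm j i
      by_cases hA : G.Adj i j <;> by_cases hZ : Z i = false <;>
        simp [hA, hZ, hX, this]
  simp_rw [h1, h2]
  exact Finset.sum_comm

lemma rowSum {n : ℕ} (G : SimpleGraph (Fin n)) [DecidableRel G.Adj] (β δ : ℝ)
    (Z X : Fin n → Bool) :
    ∑ Y ∈ Finset.univ.filter (fun Y : Fin n → Bool => ∀ i, Y i ≤ Z i),
        sisTrans G β δ X Y =
      ∏ k, (if X k then
        (if Z k then 1 else δ) *
          (1 - β) ^ ((G.neighborFinset k).filter (fun i => Z i = false)).card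
        else 1) := by
  classical
  -- step 1: identify filter with piFinset
  have hset : Finset.univ.filter (fun Y : Fin n → Bool => ∀ i, Y i ≤ Z i)
      = Fintype.piFinset (fun i => if Z i then (univ : Finset Bool) else {false}) := by
    ext Y
    simp only [Finset.mem_filter, Finset.mem_univ, true_and, Fintype.mem_piFinset]
    apply forall_congr'
    intro i
    cases hZ : Z i <;> cases hY : Y i <;> simp [hZ, hY]
  rw [hset]
  have hrw : ∀ Y ∈ Fintype.piFinset (fun i => if Z i then (univ : Finset Bool) else {false}),
      sisTrans G β δ X Y = ∏ i, (fun i b =>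
        if X i then
          (if b then 1 - δ * (1 - β) ^ numInf G X i else δ * (1 - β) ^ numInf G X i)
        else
          (if b then 1 - (1 - β) ^ numInf G X i else (1 - β) ^ numInf G X i)) i (Y i) := by
    intro Y _; rfl
  rw [Finset.sum_congr rfl hrw,
    ← Finset.prod_univ_sum (fun i => if Z i then (univ : Finset Bool) else {false})
      (fun i b =>
        if X i then
          (if b then 1 - δ * (1 - β) ^ numInf G X i else δ * (1 - β) ^ numInf G X i)
        else
          (if b then 1 - (1 - β) ^ numInf G X i else (1 - β) ^ numInf G X i))]
  -- step 3: compute each factor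
  have hfac : ∀ i, (∑ b ∈ (if Z i then (univ : Finset Bool) else {false}),
      if X i then
        (if b then 1 - δ * (1 - β) ^ numInf G X i else δ * (1 - β) ^ numInf G X i)
      else
        (if b then 1 - (1 - β) ^ numInf G X i else (1 - β) ^ numInf G X i))
      = if Z i then 1 else ((if X i then δ else 1) * (1 - β) ^ numInf G X i) := by
    intro i
    cases hZ : Z i <;> cases hX : X i <;>
      simp [hZ, hX, Fintype.sum_bool] <;> ring
  rw [Finset.prod_congr rfl (fun i _ => hfac i)]
  have lhs_split : ∀ i, (if Z i then (1:ℝ) else (if X i then δ else 1) * (1-β)^numInf G X i)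
      = (if X i then (if Z i then 1 else δ) else 1) * (1-β)^(if Z i then 0 else numInf G X i) := by
    intro i; cases hZ : Z i <;> cases hX : X i <;> simp [hZ, hX]
  have rhs_split : ∀ k, (if X k then (if Z k then (1:ℝ) else δ) *
        (1-β)^((G.neighborFinset k).filter (fun i => Z i = false)).card else 1)
      = (if X k then (if Z k then 1 else δ) else 1) *
        (1-β)^(if X k then ((G.neighborFinset k).filter (fun i => Z i = false)).card else 0) := by
    intro k; cases hX : X k <;> simp [hX]
  simp_rw [lhs_split, rhs_split]
  rw [Finset.prod_mul_distrib, Finset.prod_mul_distrib]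
  congr 1
  rw [Finset.prod_pow_eq_pow_sum, Finset.prod_pow_eq_pow_sum, swapSum G Z X]

/-- Stochastic order on probability vectors over `{0,1}^n`:
`μ ≤st μ'` iff `∑_{X ⪯ Z} μ_X ≥ ∑_{X ⪯ Z} μ'_X` for every `Z`. -/
def stLE {n : ℕ} (μ μ' : (Fin n → Bool) → ℝ) : Prop :=
  ∀ Z : Fin n → Bool,
    ∑ X ∈ Finset.univ.filter (fun X : Fin n → Bool => ∀ i, X i ≤ Z i), μ' X ≤
      ∑ X ∈ Finset.univ.filter (fun X : Fin n → Bool => ∀ i, X i ≤ Z i), μ X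

/-- The SIS transition matrix preserves the stochastic order `≤st`:
if `μ ≤st μ'` for probability distributions `μ, μ'`, then `μS ≤st μ'S`. -/
theorem stmt7 {n : ℕ} (hn : 1 ≤ n) (G : SimpleGraph (Fin n)) [DecidableRel G.Adj]
    (hG : G.Connected) (β δ : ℝ) (hβ : β ∈ Set.Ioo (0 : ℝ) 1) (hδ : δ ∈ Set.Ioo (0 : ℝ) 1)
    (μ μ' : (Fin n → Bool) → ℝ)
    (hμ0 : ∀ X, 0 ≤ μ X) (hμ1 : ∑ X, μ X = 1)
    (hμ'0 : ∀ X, 0 ≤ μ' X) (hμ'1 : ∑ X, μ' X = 1)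
    (hord : stLE μ μ') :
    stLE (μ ᵥ* sisTrans G β δ) (μ' ᵥ* sisTrans G β δ) := by
  intro Z
  set a : Fin n → ℝ := fun k => (if Z k then 1 else δ) *
    (1 - β) ^ ((G.neighborFinset k).filter (fun i => Z i = false)).card with ha
  have ha0 : ∀ k, 0 ≤ a k := by
    intro k
    apply mul_nonneg
    · split <;> [norm_num; exact hδ.1.le]
    · exact pow_nonneg (by linarith [hβ.2]) _
  have ha1 : ∀ k, a k ≤ 1 := by
    intro k
    have h1 : (if Z k then (1:ℝ) else δ) ≤ 1 := by
      split
      · exact le_rfl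
      · exact hδ.2.le
    calc a k ≤ 1 * 1 := by
          apply mul_le_mul h1 (pow_le_one₀ (by linarith [hβ.2]) (by linarith [hβ.1]))
            (pow_nonneg (by linarith [hβ.2]) _) (by norm_num)
      _ = 1 := by norm_num
  have key : ∀ ν : (Fin n → Bool) → ℝ,
      ∑ Y ∈ Finset.univ.filter (fun Y : Fin n → Bool => ∀ i, Y i ≤ Z i),
          (ν ᵥ* sisTrans G β δ) Y
        = ∑ W : Fin n → Bool, (∏ k, if W k then a k else 1 - a k) *
            (∑ X ∈ Finset.univ.filter (fun X : Fin n → Bool => ∀ i, X i ≤ W i), ν X) := by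
    intro ν
    have hv : ∀ Y, (ν ᵥ* sisTrans G β δ) Y = ∑ X, ν X * sisTrans G β δ X Y := by
      intro Y; simp [Matrix.vecMul, dotProduct]
    simp_rw [hv]
    rw [Finset.sum_comm]
    have hrow : ∀ X, ∑ Y ∈ Finset.univ.filter (fun Y : Fin n → Bool => ∀ i, Y i ≤ Z i),
        sisTrans G β δ X Y = ∏ k, (if X k then a k else 1) := fun X => rowSum G β δ Z X
    simp_rw [← Finset.mul_sum]
    simp_rw [hrow, prod_if_decomp a, Finset.mul_sum]
    rw [Finset.sum_comm]
    apply Finset.sum_congr rfl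
    intro W _
    rw [Finset.sum_filter]
    apply Finset.sum_congr rfl
    intro X _
    by_cases h : ∀ k, X k ≤ W k
    · simp only [if_pos h]; ring
    · simp only [if_neg h]; ring
  rw [key μ, key μ']
  apply Finset.sum_le_sum
  intro W _
  apply mul_le_mul_of_nonneg_left (hord W)
  apply Finset.prod_nonneg
  intro k _
  split
  · exact ha0 k
  · linarith [ha1 k]
end

section
/- For every r ∈ [0,1]^n, Su(r) ⪰ u(Φ(r)) entrywise, i.e. for every state X ∈ {0,1}^n, (Su(r))_X ≥ ∏_{i∈S(X)}(1 − Φ_i(r)), where S is the transition matrix of the SIS Markov chain and Φ is the SIS nonlinear map. -/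
open Matrix Finset

/-- The vector `u(r) ∈ ℝ^{2^n}` with entries `u(r)_X = ∏_{i ∈ S(X)} (1 − r_i)`. -/
noncomputable def uVec {n : ℕ} (r : Fin n → ℝ) : (Fin n → Bool) → ℝ :=
  fun X => ∏ i ∈ Finset.univ.filter (fun i => X i = true), (1 - r i)

private lemma chord_bound (β r : ℝ) (hβ0 : 0 ≤ β) (hβ1 : β ≤ 1) (hr0 : 0 ≤ r) (hr1 : r ≤ 1) :
    ∀ m : ℕ, (1 - β * r) ^ m ≤ (1 - r) + r * (1 - β) ^ m := by
  intro m
  induction m with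
  | zero => simp
  | succ m ih =>
    have hc0 : (0:ℝ) ≤ 1 - β := by linarith
    have hcm : (0:ℝ) ≤ (1-β)^m := pow_nonneg hc0 m
    have hcm1 : (1-β)^m ≤ 1 := pow_le_one₀ hc0 (by linarith)
    have hbr : (0:ℝ) ≤ 1 - β * r := by nlinarith
    have h1 : (1 - β*r)^(m+1) = (1-β*r)^m * (1-β*r) := pow_succ _ _
    have h2 : (1 - β)^(m+1) = (1-β)^m * (1-β) := pow_succ _ _
    nlinarith [mul_le_mul_of_nonneg_right ih hbr, mul_nonneg hr0 hcm,
      mul_nonneg (mul_nonneg hβ0 hr0) (sub_nonneg.2 hr1)]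

/-- For every `r ∈ [0,1]^n`, `S u(r) ⪰ u(Φ(r))` entrywise: for every state
`X`, `(S u(r))_X ≥ ∏_{i∈S(X)} (1 − Φ_i(r))`. -/
theorem stmt8 {n : ℕ} (hn : 1 ≤ n) (G : SimpleGraph (Fin n)) [DecidableRel G.Adj]
    (hG : G.Connected) (β δ : ℝ) (hβ : β ∈ Set.Ioo (0 : ℝ) 1) (hδ : δ ∈ Set.Ioo (0 : ℝ) 1)
    (r : Fin n → ℝ) (hr : r ∈ Set.Icc (0 : Fin n → ℝ) 1) (X : Fin n → Bool) :
    uVec (sisPhi G β δ r) X ≤ (sisTrans G β δ *ᵥ uVec r) X := by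
  obtain ⟨hβ0, hβ1⟩ := hβ
  obtain ⟨hδ0, hδ1⟩ := hδ
  obtain ⟨hr0', hr1'⟩ := hr
  have hr0 : ∀ i, (0:ℝ) ≤ r i := fun i => hr0' i
  have hr1 : ∀ i, r i ≤ 1 := fun i => hr1' i
  -- LHS of the goal (the uVec side) rewritten as a product over all nodes
  have hRHS : uVec (sisPhi G β δ r) X
      = ∏ i, ((if X i then 1 - (1-δ) * r i else 1) * (1 - β * r i) ^ numInf G X i) := by
    have h1 : ∀ i : Fin n, 1 - sisPhi G β δ r i
        = (1 - (1-δ) * r i) * ∏ j ∈ G.neighborFinset i, (1 - β * r j) := by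
      intro i; simp only [sisPhi]; ring
    rw [uVec]
    rw [Finset.prod_congr rfl (fun i _ => h1 i), Finset.prod_mul_distrib]
    have h2 : ∏ i ∈ Finset.univ.filter (fun i => X i = true),
          ∏ j ∈ G.neighborFinset i, (1 - β * r j)
        = ∏ j : Fin n, (1 - β * r j) ^ numInf G X j := by
      rw [Finset.prod_comm' (t' := Finset.univ)
        (s' := fun j => (Finset.univ.filter (fun i => X i = true)).filter
          (fun i => i ∈ G.neighborFinset j))
        (by intro i j
            simp only [Finset.mem_filter, Finset.mem_univ, true_and, and_true,
              SimpleGraph.mem_neighborFinset]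
            rw [G.adj_comm])]
      refine Finset.prod_congr rfl (fun j _ => ?_)
      rw [Finset.prod_const]
      congr 1
      rw [numInf]
      congr 1
      ext i
      simp only [Finset.mem_filter, Finset.mem_univ, true_and,
        SimpleGraph.mem_neighborFinset]
      rw [G.adj_comm]
      tauto
    rw [h2, Finset.prod_filter, Finset.prod_mul_distrib]
  -- RHS of the goal (the matrix side) rewritten as a product over all nodes
  have hLHS : (sisTrans G β δ *ᵥ uVec r) X
      = ∏ i, (if X i then
          δ * (1-β)^numInf G X i + (1 - δ * (1-β)^numInf G X i) * (1 - r i)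
        else
          (1-β)^numInf G X i + (1 - (1-β)^numInf G X i) * (1 - r i)) := by
    have key : ∀ i : Fin n, ∑ b : Bool,
        ((if X i then (if b then 1 - δ * (1 - β) ^ numInf G X i else δ * (1 - β) ^ numInf G X i)
          else (if b then 1 - (1 - β) ^ numInf G X i else (1 - β) ^ numInf G X i))
          * (if b then 1 - r i else 1))
        = (if X i then
            δ * (1-β)^numInf G X i + (1 - δ * (1-β)^numInf G X i) * (1 - r i)
          else
            (1-β)^numInf G X i + (1 - (1-β)^numInf G X i) * (1 - r i)) := by
      intro i
      by_cases h : X i <;> simp [h, Fintype.sum_bool] <;> ring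
    rw [← Finset.prod_congr rfl (fun i _ => key i)]
    rw [Finset.prod_univ_sum]
    rw [Fintype.piFinset_univ]
    simp only [mulVec, dotProduct, sisTrans, uVec, Matrix.of_apply]
    refine Finset.sum_congr rfl (fun Y _ => ?_)
    rw [Finset.prod_filter, ← Finset.prod_mul_distrib]
  rw [hRHS, hLHS]
  -- now a factorwise comparison
  refine Finset.prod_le_prod (fun i _ => ?_) (fun i _ => ?_)
  · have h0 : (0:ℝ) ≤ 1 - β * r i := by nlinarith [hr0 i, hr1 i]
    have h1 : (0:ℝ) ≤ (1 - β * r i) ^ numInf G X i := pow_nonneg h0 _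
    by_cases h : X i <;> simp only [h, if_true, if_false, Bool.false_eq_true, one_mul] <;>
      [skip; simpa using h1]
    have : (0:ℝ) ≤ 1 - (1-δ) * r i := by nlinarith [hr0 i, hr1 i]
    exact mul_nonneg this h1
  · set m := numInf G X i with hm
    have hri0 : (0:ℝ) ≤ r i := hr0 i
    have hri1 : r i ≤ 1 := hr1 i
    have hch := chord_bound β (r i) (le_of_lt hβ0) (le_of_lt hβ1) hri0 hri1 m
    have hc0 : (0:ℝ) ≤ 1 - β := by linarith
    have hcm : (0:ℝ) ≤ (1-β)^m := pow_nonneg hc0 m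
    have hcm1 : (1-β)^m ≤ 1 := pow_le_one₀ hc0 (by linarith)
    by_cases h : X i <;> simp only [h, if_true, if_false, Bool.false_eq_true, one_mul]
    · have hA : (0:ℝ) ≤ 1 - (1-δ) * r i := by nlinarith
      have step1 : (1 - (1-δ) * r i) * (1 - β * r i) ^ m
          ≤ (1 - (1-δ) * r i) * ((1 - r i) + r i * (1-β)^m) :=
        mul_le_mul_of_nonneg_left hch hA
      have step2 : (1 - (1-δ) * r i) * ((1 - r i) + r i * (1-β)^m)
          ≤ δ * (1-β)^m + (1 - δ * (1-β)^m) * (1 - r i) := by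
        nlinarith [mul_nonneg (mul_nonneg hri0 (sub_nonneg.2 hri1)) (sub_nonneg.2 hcm1)]
      linarith
    · have : (1-β)^m + (1 - (1-β)^m) * (1 - r i) = (1 - r i) + r i * (1-β)^m := by ring
      rw [this]
      exact hch
end

section
/- For the SIS Markov chain started deterministically at any state X ∈ {0,1}^n, for every t ≥ 0, the probability of not being absorbed satisfies P(ξ(t) ≠ 0̄ | ξ(0) = X) ≤ 1 − ∏_{i∈S(X)}(1 − Φ^t_i(1_n)), where 0̄ is the all-healthy state, 1_n = (1,…,1)ᵀ ∈ [0,1]^n, and Φ^t is the t-fold iterate of the SIS nonlinear map. -/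
open Matrix Finset

lemma key_ineq (d b p : ℝ) (hd0 : 0 ≤ d) (hd1 : d ≤ 1) (hb0 : 0 ≤ b) (hb1 : b ≤ 1)
    (hp0 : 0 ≤ p) (hp1 : p ≤ 1) (m : ℕ) :
    (1 - (1 - d) * p) * (1 - b * p) ^ m ≤ 1 - (1 - d * (1 - b) ^ m) * p := by
  induction m with
  | zero => simp
  | succ m ih =>
    have hC0 : (0:ℝ) ≤ (1 - b) ^ m := pow_nonneg (by linarith) m
    have hC1 : (1 - b) ^ m ≤ 1 := pow_le_one₀ (by linarith) (by linarith)
    have hbp : (0:ℝ) ≤ 1 - b * p := by nlinarith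
    have hdC : d * (1 - b) ^ m ≤ 1 := by nlinarith
    have h1 : (1 - (1 - d) * p) * (1 - b * p) ^ (m+1)
        ≤ (1 - (1 - d * (1 - b) ^ m) * p) * (1 - b * p) := by
      rw [pow_succ, ← mul_assoc]
      exact mul_le_mul_of_nonneg_right ih hbp
    calc (1 - (1 - d) * p) * (1 - b * p) ^ (m+1)
        ≤ (1 - (1 - d * (1 - b) ^ m) * p) * (1 - b * p) := h1
      _ ≤ 1 - (1 - d * (1 - b) ^ (m+1)) * p := by
          rw [pow_succ]
          nlinarith [mul_nonneg (mul_nonneg hb0 hp0)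
            (mul_nonneg (sub_nonneg.2 hp1) (sub_nonneg.2 hdC))]

section aux
variable {n : ℕ} (G : SimpleGraph (Fin n)) [DecidableRel G.Adj]

lemma phi_bounds {β δ : ℝ} (hβ0 : 0 ≤ β) (hβ1 : β ≤ 1) (hδ0 : 0 ≤ δ) (hδ1 : δ ≤ 1)
    {x : Fin n → ℝ} (hx : ∀ i, 0 ≤ x i ∧ x i ≤ 1) (i : Fin n) :
    0 ≤ sisPhi G β δ x i ∧ sisPhi G β δ x i ≤ 1 := by
  have hP0 : 0 ≤ ∏ j ∈ G.neighborFinset i, (1 - β * x j) :=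
    Finset.prod_nonneg fun j _ => by nlinarith [(hx j).1, (hx j).2]
  have hP1 : ∏ j ∈ G.neighborFinset i, (1 - β * x j) ≤ 1 :=
    Finset.prod_le_one (fun j _ => by nlinarith [(hx j).1, (hx j).2])
      (fun j _ => by nlinarith [(hx j).1, (hx j).2])
  have ha0 : 0 ≤ (1 - δ) * x i := mul_nonneg (by linarith) (hx i).1
  have ha1 : (1 - δ) * x i ≤ 1 := by nlinarith [(hx i).1, (hx i).2]
  unfold sisPhi
  constructor
  · nlinarith [mul_nonneg (by linarith : (0:ℝ) ≤ 1 - (1-δ)*x i) (by linarith : (0:ℝ) ≤ 1 - ∏ j ∈ G.neighborFinset i, (1 - β * x j))]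
  · nlinarith [mul_nonneg (by linarith : (0:ℝ) ≤ 1 - (1-δ)*x i) hP0]

lemma iter_bounds {β δ : ℝ} (hβ0 : 0 ≤ β) (hβ1 : β ≤ 1) (hδ0 : 0 ≤ δ) (hδ1 : δ ≤ 1)
    (t : ℕ) (i : Fin n) :
    0 ≤ (sisPhi G β δ)^[t] (fun _ => 1) i ∧ (sisPhi G β δ)^[t] (fun _ => 1) i ≤ 1 := by
  induction t generalizing i with
  | zero => simp
  | succ t ih =>
    rw [Function.iterate_succ_apply']
    exact phi_bounds G hβ0 hβ1 hδ0 hδ1 ih i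

lemma one_sub_phi {β δ : ℝ} (x : Fin n → ℝ) (i : Fin n) :
    1 - sisPhi G β δ x i
      = (1 - (1 - δ) * x i) * ∏ j ∈ G.neighborFinset i, (1 - β * x j) := by
  unfold sisPhi; ring

/-- swap the double product using symmetry of adjacency -/
lemma double_prod (X : Fin n → Bool) (f : Fin n → ℝ) :
    ∏ i ∈ Finset.univ.filter (fun i => X i = true), ∏ j ∈ G.neighborFinset i, f j
      = ∏ j, f j ^ numInf G X j := by
  have h1 : ∀ i, ∏ j ∈ G.neighborFinset i, f j
      = ∏ j, if j ∈ G.neighborFinset i then f j else 1 := by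
    intro i
    rw [← Finset.prod_filter]
    congr 1
    ext j
    simp
  simp_rw [h1]
  rw [Finset.prod_comm]
  refine Finset.prod_congr rfl fun j _ => ?_
  rw [← Finset.prod_filter, Finset.prod_const]
  congr 1
  unfold numInf
  apply Finset.card_bij (fun i _ => i)
  · intro i hi
    simp only [Finset.mem_filter, Finset.mem_univ, true_and, SimpleGraph.mem_neighborFinset] at hi ⊢
    exact ⟨hi.2.symm, hi.1⟩
  · intro a ha b hb h; exact h
  · intro i hi
    simp only [Finset.mem_filter, SimpleGraph.mem_neighborFinset, Finset.mem_univ, true_and] at hi ⊢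
    exact ⟨i, ⟨hi.2, hi.1.symm⟩, rfl⟩

lemma trans_nonneg {β δ : ℝ} (hβ0 : 0 ≤ β) (hβ1 : β ≤ 1) (hδ0 : 0 ≤ δ) (hδ1 : δ ≤ 1)
    (X Y : Fin n → Bool) : 0 ≤ sisTrans G β δ X Y := by
  unfold sisTrans
  rw [Matrix.of_apply]
  refine Finset.prod_nonneg fun i _ => ?_
  have hp0 : (0:ℝ) ≤ (1-β) ^ numInf G X i := pow_nonneg (by linarith) _
  have hp1 : (1-β) ^ numInf G X i ≤ 1 := pow_le_one₀ (by linarith) (by linarith)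
  by_cases h : X i <;> by_cases h' : Y i <;> simp [h, h'] <;> nlinarith

/-- the one-step sum formula -/
lemma step_sum {β δ : ℝ} (X : Fin n → Bool) (q : Fin n → ℝ) :
    ∑ Y : Fin n → Bool, sisTrans G β δ X Y *
        ∏ i ∈ Finset.univ.filter (fun i => Y i = true), (1 - q i)
      = ∏ i, (1 - (1 - (if X i then δ else 1) * (1-β) ^ numInf G X i) * q i) := by
  set h : Fin n → Bool → ℝ := fun i b =>
      (if X i then
        (if b then 1 - δ * (1 - β) ^ numInf G X i else δ * (1 - β) ^ numInf G X i)
      else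
        (if b then 1 - (1 - β) ^ numInf G X i else (1 - β) ^ numInf G X i)) *
      (if b then 1 - q i else 1) with hh
  have key : ∀ Y : Fin n → Bool, sisTrans G β δ X Y *
      ∏ i ∈ Finset.univ.filter (fun i => Y i = true), (1 - q i)
      = ∏ i, h i (Y i) := by
    intro Y
    rw [Finset.prod_filter]
    unfold sisTrans
    rw [Matrix.of_apply, ← Finset.prod_mul_distrib]
  calc ∑ Y : Fin n → Bool, sisTrans G β δ X Y *
        ∏ i ∈ Finset.univ.filter (fun i => Y i = true), (1 - q i)
      = ∑ Y ∈ Fintype.piFinset (fun _ : Fin n => (Finset.univ : Finset Bool)),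
          ∏ i, h i (Y i) := by
        rw [Fintype.piFinset_univ]
        exact Finset.sum_congr rfl fun Y _ => key Y
    _ = ∏ i, ∑ b ∈ (Finset.univ : Finset Bool), h i b :=
        (Finset.prod_univ_sum _ _).symm
    _ = ∏ i, (1 - (1 - (if X i then δ else 1) * (1-β) ^ numInf G X i) * q i) := by
        refine Finset.prod_congr rfl fun i _ => ?_
        rw [Fintype.sum_bool, hh]
        by_cases hx : X i <;> simp [hx] <;> ring
end aux

section main
variable {n : ℕ} (G : SimpleGraph (Fin n)) [DecidableRel G.Adj]

lemma main_ind {β δ : ℝ} (hβ : β ∈ Set.Ioo (0:ℝ) 1) (hδ : δ ∈ Set.Ioo (0:ℝ) 1) :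
    ∀ (t : ℕ) (X : Fin n → Bool),
      ∏ i ∈ Finset.univ.filter (fun i => X i = true),
        (1 - (sisPhi G β δ)^[t] (fun _ => 1) i)
        ≤ (sisTrans G β δ ^ t) X (fun _ => false) := by
  have hβ0 : (0:ℝ) ≤ β := le_of_lt hβ.1
  have hβ1 : β ≤ 1 := le_of_lt hβ.2
  have hδ0 : (0:ℝ) ≤ δ := le_of_lt hδ.1
  have hδ1 : δ ≤ 1 := le_of_lt hδ.2
  intro t
  induction t with
  | zero =>
    intro X
    simp only [Function.iterate_zero, id_eq, pow_zero]
    by_cases hX : X = fun _ => false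
    · subst hX
      rw [Matrix.one_apply_eq]
      simp
    · rw [Matrix.one_apply_ne hX]
      obtain ⟨i, hi⟩ : ∃ i, X i = true := by
        by_contra h
        push_neg at h
        exact hX (funext fun i => by simpa using h i)
      have hmem : i ∈ Finset.univ.filter (fun i => X i = true) := by
        simp [hi]
      rw [Finset.prod_eq_zero hmem (by norm_num)]
  | succ t ih =>
    intro X
    rw [pow_succ', Matrix.mul_apply]
    set p := (sisPhi G β δ)^[t] (fun _ : Fin n => (1:ℝ)) with hp
    have hpb : ∀ i, 0 ≤ p i ∧ p i ≤ 1 := fun i => iter_bounds G hβ0 hβ1 hδ0 hδ1 t i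
    have h1 : ∑ Y : Fin n → Bool, sisTrans G β δ X Y *
          ∏ i ∈ Finset.univ.filter (fun i => Y i = true), (1 - p i)
        ≤ ∑ Y : Fin n → Bool, sisTrans G β δ X Y * (sisTrans G β δ ^ t) Y (fun _ => false) :=
      Finset.sum_le_sum fun Y _ =>
        mul_le_mul_of_nonneg_left (ih Y) (trans_nonneg G hβ0 hβ1 hδ0 hδ1 X Y)
    refine le_trans ?_ h1
    rw [step_sum]
    have hiter : (sisPhi G β δ)^[t+1] (fun _ : Fin n => (1:ℝ)) = sisPhi G β δ p := by
      rw [hp, Function.iterate_succ_apply']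
    rw [hiter]
    calc ∏ i ∈ Finset.univ.filter (fun i => X i = true), (1 - sisPhi G β δ p i)
        = ∏ i ∈ Finset.univ.filter (fun i => X i = true),
            ((1 - (1 - δ) * p i) * ∏ j ∈ G.neighborFinset i, (1 - β * p j)) :=
          Finset.prod_congr rfl fun i _ => by rw [one_sub_phi]
      _ = (∏ i ∈ Finset.univ.filter (fun i => X i = true), (1 - (1 - δ) * p i)) *
            ∏ i ∈ Finset.univ.filter (fun i => X i = true),
              ∏ j ∈ G.neighborFinset i, (1 - β * p j) := Finset.prod_mul_distrib
      _ = (∏ i ∈ Finset.univ.filter (fun i => X i = true), (1 - (1 - δ) * p i)) *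
            ∏ j, (1 - β * p j) ^ numInf G X j := by rw [double_prod]
      _ = ∏ i, ((if X i then (1 - (1 - δ) * p i) else 1) * (1 - β * p i) ^ numInf G X i) := by
          rw [Finset.prod_mul_distrib, ← Finset.prod_filter]
      _ ≤ ∏ i, (1 - (1 - (if X i then δ else 1) * (1 - β) ^ numInf G X i) * p i) := by
          refine Finset.prod_le_prod (fun i _ => ?_) (fun i _ => ?_)
          · have h0 : (0:ℝ) ≤ (1 - β * p i) ^ numInf G X i :=
              pow_nonneg (by nlinarith [(hpb i).1, (hpb i).2]) _
            by_cases h : X i <;> simp [h]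
            · exact mul_nonneg (by nlinarith [(hpb i).1, (hpb i).2]) h0
            · exact h0
          · by_cases h : X i <;> simp only [h, if_true, if_false]
            · exact key_ineq δ β (p i) hδ0 hδ1 hβ0 hβ1 (hpb i).1 (hpb i).2 _
            · have := key_ineq 1 β (p i) zero_le_one le_rfl hβ0 hβ1 (hpb i).1 (hpb i).2
                (numInf G X i)
              simpa using this

end main

/-- For the SIS chain started deterministically at state `X`, for every `t`,
`P(ξ(t) ≠ 0̄ | ξ(0) = X) = 1 − (Sᵗ)_{X,0̄} ≤ 1 − ∏_{i∈S(X)} (1 − Φᵗ_i(1_n))`. -/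
theorem stmt9 {n : ℕ} (hn : 1 ≤ n) (G : SimpleGraph (Fin n)) [DecidableRel G.Adj]
    (hG : G.Connected) (β δ : ℝ) (hβ : β ∈ Set.Ioo (0 : ℝ) 1) (hδ : δ ∈ Set.Ioo (0 : ℝ) 1)
    (X : Fin n → Bool) (t : ℕ) :
    1 - (sisTrans G β δ ^ t) X (fun _ => false) ≤
      1 - ∏ i ∈ Finset.univ.filter (fun i => X i = true),
        (1 - (sisPhi G β δ)^[t] (fun _ => 1) i) := by
  exact sub_le_sub_left (main_ind G hβ hδ t X) 1
end
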